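/- arXiv:2310.09491 — 10 statements merged into one kernel-verified Lean document; each statement's English description precedes it below -/
import Mathlib

section
/- Let (R, m) be a Noetherian local ring, let b ⊆ R be an ideal, and set a = m·b. If G is a finitely generated R-module with b·G = 0, and M is a finitely generated R-module with M/aM ≅ G as R-modules, then aM = 0, and hence M ≅ G as R-modules. -/
/-- Let `(R, m)` be a Noetherian local ring, `b ⊆ R` an ideal, and
`a = m·b`. If `G` is a finitely generated `R`-module with `b·G = 0`, and `M` is a
finitely generated `R`-module with `M/aM ≅ G` as `R`-modules, then `aM = 0`, and
hence `M ≅ G` as `R`-modules. -/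
theorem stmt_0 (R : Type*) [CommRing R] [IsNoetherianRing R] [IsLocalRing R]
    (b a : Ideal R) (ha : a = IsLocalRing.maximalIdeal R * b)
    (G : Type*) [AddCommGroup G] [Module R G] [Module.Finite R G]
    (hbG : ∀ x ∈ b, ∀ g : G, x • g = (0 : G))
    (M : Type*) [AddCommGroup M] [Module R M] [Module.Finite R M]
    (e : (M ⧸ (a • ⊤ : Submodule R M)) ≃ₗ[R] G) :
    (a • ⊤ : Submodule R M) = ⊥ ∧ Nonempty (M ≃ₗ[R] G) := by
  -- b • M ≤ a • M
  have hle : (b • ⊤ : Submodule R M) ≤ (a • ⊤ : Submodule R M) := by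
    rw [Submodule.smul_le]
    intro r hr m _
    have h0 : r • Submodule.Quotient.mk (p := (a • ⊤ : Submodule R M)) m = 0 := by
      apply e.injective
      rw [map_smul, map_zero]
      exact hbG r hr _
    rwa [← Submodule.Quotient.mk_smul, Submodule.Quotient.mk_eq_zero] at h0
  -- Nakayama: b • M = ⊥
  have hN : (b • ⊤ : Submodule R M) = ⊥ := by
    apply Submodule.eq_bot_of_le_smul_of_le_jacobson_bot (IsLocalRing.maximalIdeal R)
    · exact (IsNoetherian.noetherian _)
    · calc (b • ⊤ : Submodule R M) ≤ (a • ⊤ : Submodule R M) := hle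
        _ = IsLocalRing.maximalIdeal R • b • (⊤ : Submodule R M) := by
            rw [ha, ← smul_eq_mul, Submodule.smul_assoc]
    · rw [IsLocalRing.jacobson_eq_maximalIdeal ⊥ bot_ne_top]
  have haM : (a • ⊤ : Submodule R M) = ⊥ := by
    rw [ha, ← smul_eq_mul, Submodule.smul_assoc, hN, Submodule.smul_bot]
  refine ⟨haM, ⟨(Submodule.quotEquivOfEqBot _ haM).symm.trans e⟩⟩
end

section
/- Let R be a Noetherian local ring and A, B two m×n matrices over R, viewed as R-linear maps R^n → R^m. Then im(A) = im(B) as submodules of R^m if and only if there exists g ∈ GL_n(R) with A·g = B. -/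
/-!
Write `B = A C` and `A = B D`. Adding to `C` any matrix `N` with `A N = 0` keeps `A C = B`, so it
suffices to make `C` invertible this way, i.e. invertible modulo the maximal ideal. Let `L` be the
reduction of `ker A` in `kⁿ`, `k` the residue field. Since `A (1 - C D) = 0`, `C̄ D̄ ≡ 1` modulo `L`,
so `C̄` is onto modulo `L`. Over a field, two surjections `kⁿ → kⁿ / L` differ by an automorphism,
which yields an invertible `X` with the columns of `X - C̄` in `L`; lifting them to columns of `N`
in `ker A` makes `C + N` reduce to `X`.
-/

open LinearMap Matrix IsLocalRing

namespace LinearMap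

variable {K V W : Type*} [DivisionRing K] [AddCommGroup V] [Module K V] [AddCommGroup W]
  [Module K W] [FiniteDimensional K V]

theorem exists_linearEquiv_comp_eq_of_surjective {f g : V →ₗ[K] W}
    (hf : Function.Surjective f) (hg : Function.Surjective g) :
    ∃ e : V ≃ₗ[K] V, f ∘ₗ e.toLinearMap = g := by
  obtain ⟨s, hs⟩ := f.exists_rightInverse_of_surjective (range_eq_top.mpr hf)
  obtain ⟨t, ht⟩ := g.exists_rightInverse_of_surjective (range_eq_top.mpr hg)
  let ef := (exact_subtype_ker_map f).splitSurjectiveEquiv (Submodule.injective_subtype _) ⟨s, hs⟩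
  let eg := (exact_subtype_ker_map g).splitSurjectiveEquiv (Submodule.injective_subtype _) ⟨t, ht⟩
  have hker : Module.finrank K (ker g) = Module.finrank K (ker f) := by
    have := f.finrank_range_add_finrank_ker
    have := g.finrank_range_add_finrank_ker
    rw [range_eq_top.mpr hf, range_eq_top.mpr hg] at *
    omega
  refine ⟨eg.1 ≪≫ₗ (LinearEquiv.ofFinrankEq _ _ hker).prodCongr (.refl K W) ≪≫ₗ ef.1.symm, ?_⟩
  ext v
  rw [comp_apply, LinearMap.congr_fun ef.2.2, LinearMap.congr_fun eg.2.2]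
  simp

theorem exists_linearEquiv_sub_mem_of_sup_range_eq_top {L : Submodule K V} {c : V →ₗ[K] V}
    (h : L ⊔ range c = ⊤) : ∃ e : V ≃ₗ[K] V, ∀ v, e v - c v ∈ L := by
  have hc : Function.Surjective (L.mkQ ∘ₗ c) := by
    rw [← range_eq_top, range_comp, Submodule.map_mkQ_eq_top, h]
  obtain ⟨e, he⟩ := exists_linearEquiv_comp_eq_of_surjective L.mkQ_surjective hc
  exact ⟨e, fun v => (Submodule.Quotient.eq L).mp (LinearMap.congr_fun he v)⟩

end LinearMap

def RingHom.piSemilinearMap {R S : Type*} [Semiring R] [Semiring S] (φ : R →+* S) (ι : Type*) :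
    (ι → R) →ₛₗ[φ] (ι → S) where
  toFun v := φ ∘ v
  map_add' v w := by ext; simp
  map_smul' c v := by ext; simp

instance (R : Type*) [CommRing R] [IsLocalRing R] : RingHomSurjective (residue R) :=
  ⟨residue_surjective⟩

namespace Matrix

section Semiring

variable {R : Type*} [CommSemiring R] {m n p : Type*} [Fintype n]

theorem col_mul (A : Matrix m n R) (B : Matrix n p R) (j : p) : (A * B).col j = A *ᵥ B.col j :=
  rfl

theorem exists_mul_eq_of_range_le [Fintype p] [DecidableEq p] {A : Matrix m n R}
    {B : Matrix m p R} (h : range B.mulVecLin ≤ range A.mulVecLin) :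
    ∃ C : Matrix n p R, A * C = B := by
  choose c hc using fun j => h ⟨Pi.single j 1, rfl⟩
  refine ⟨(of c)ᵀ, ext_col fun j => ?_⟩
  rw [col_mul, ← mulVec_single_one B]
  exact hc j

theorem range_mulVecLin_mul_generalLinearGroup [DecidableEq n] (A : Matrix m n R)
    (g : GL n R) : range (A * (g : Matrix n n R)).mulVecLin = range A.mulVecLin := by
  rw [mulVecLin_mul, range_comp_of_range_eq_top]
  exact range_eq_top.mpr fun v => ⟨(g⁻¹ : GL n R) *ᵥ v, by simp [mulVec_mulVec]⟩

variable {S : Type*} [CommSemiring S] (φ : R →+* S) [RingHomSurjective φ]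

theorem range_mulVecLin_map_le_of_mul_eq_zero [Fintype p] {A : Matrix m n R}
    {K : Matrix n p R} (hAK : A * K = 0) :
    range (K.map φ).mulVecLin ≤ (ker A.mulVecLin).map (φ.piSemilinearMap n) := by
  rw [range_mulVecLin, Submodule.span_le]
  rintro _ ⟨j, rfl⟩
  exact ⟨K.col j, by rw [SetLike.mem_coe, mem_ker, mulVecLin_apply, ← col_mul, hAK]; rfl, rfl⟩

theorem exists_mul_eq_zero_and_map_eq {A : Matrix m n R} {M : Matrix n p S}
    (hM : ∀ j, M.col j ∈ (ker A.mulVecLin).map (φ.piSemilinearMap n)) :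
    ∃ N : Matrix n p R, A * N = 0 ∧ N.map φ = M := by
  choose w hw hwM using hM
  exact ⟨(of w)ᵀ, ext_col hw, ext_col hwM⟩

end Semiring

theorem exists_mul_generalLinearGroup_eq_of_range_eq {R : Type*} [CommRing R] [IsLocalRing R]
    {m n : Type*} [Fintype n] [DecidableEq n] {A B : Matrix m n R}
    (h : range A.mulVecLin = range B.mulVecLin) :
    ∃ g : GL n R, A * (g : Matrix n n R) = B := by
  obtain ⟨C, hC⟩ := exists_mul_eq_of_range_le h.ge
  obtain ⟨D, hD⟩ := exists_mul_eq_of_range_le h.le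
  set π := residue R
  set L := (ker A.mulVecLin).map (π.piSemilinearMap n)
  have hL : L ⊔ range (C.map π).mulVecLin = ⊤ := by
    have hK : range ((1 - C * D).map π).mulVecLin ≤ L :=
      range_mulVecLin_map_le_of_mul_eq_zero π
        (by rw [Matrix.mul_sub, Matrix.mul_one, ← Matrix.mul_assoc, hC, hD, sub_self])
    refine eq_top_iff.mpr fun v _ => ?_
    have hv : v = (1 - C * D).map π *ᵥ v + C.map π *ᵥ (D.map π *ᵥ v) := by
      simp [Matrix.map_sub, Matrix.map_mul, sub_mulVec, mulVec_mulVec]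
    rw [hv]
    exact Submodule.add_mem_sup (hK ⟨v, rfl⟩) ⟨_, rfl⟩
  obtain ⟨e, he⟩ := LinearMap.exists_linearEquiv_sub_mem_of_sup_range_eq_top hL
  obtain ⟨N, hAN, hN⟩ := exists_mul_eq_zero_and_map_eq π (A := A)
    (M := toMatrix' e.toLinearMap - C.map π) fun j => by
      rw [← mulVec_single_one, sub_mulVec, toMatrix'_mulVec]
      exact he _
  have hdet : IsUnit (C + N).det := by
    rw [← isUnit_map_iff π, RingHom.map_det, map_add, RingHom.mapMatrix_apply,
      RingHom.mapMatrix_apply, hN, add_sub_cancel, det_toMatrix']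
    exact e.isUnit_det'
  exact ⟨((C + N).isUnit_iff_isUnit_det.mpr hdet).unit,
    by rw [IsUnit.unit_spec, Matrix.mul_add, hC, hAN, add_zero]⟩

end Matrix

theorem stmt_2_general (R : Type*) [CommRing R] [IsLocalRing R]
    (m n : ℕ) (A B : Matrix (Fin m) (Fin n) R) :
    LinearMap.range A.mulVecLin = LinearMap.range B.mulVecLin ↔
      ∃ g : Matrix.GeneralLinearGroup (Fin n) R,
        A * (g : Matrix (Fin n) (Fin n) R) = B := by
  refine ⟨exists_mul_generalLinearGroup_eq_of_range_eq, ?_⟩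
  rintro ⟨g, rfl⟩
  exact (range_mulVecLin_mul_generalLinearGroup A g).symm

/-- Let `R` be a Noetherian local ring and `A, B` two `m×n` matrices
over `R`, viewed as `R`-linear maps `R^n → R^m`. Then `im(A) = im(B)` as submodules of
`R^m` if and only if there exists `g ∈ GL_n(R)` with `A·g = B`. -/
theorem stmt_2 (R : Type*) [CommRing R] [IsNoetherianRing R] [IsLocalRing R]
    (m n : ℕ) (A B : Matrix (Fin m) (Fin n) R) :
    LinearMap.range A.mulVecLin = LinearMap.range B.mulVecLin ↔
      ∃ g : Matrix.GeneralLinearGroup (Fin n) R,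
        A * (g : Matrix (Fin n) (Fin n) R) = B :=
  stmt_2_general R m n A B
end

section
/- Let R be a Noetherian local ring, m, n positive integers, and N₁, N₂ submodules of R^m. Then R^m/N₁ ≅ R^m/N₂ as R-modules if and only if there exists g ∈ GL_m(R) with g·N₁ = N₂. -/
open LinearMap Submodule Matrix

lemma field_correction {k V : Type*} [Field k] [AddCommGroup V] [Module k V]
    [FiniteDimensional k V] (f : V →ₗ[k] V) (K : Submodule k V)
    (h : LinearMap.range f ⊔ K = ⊤) :
    ∃ δ : V →ₗ[k] V, LinearMap.range δ ≤ K ∧ Function.Bijective (f + δ) := by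
  classical
  obtain ⟨d, hd⟩ := Submodule.exists_isCompl (LinearMap.range f ⊓ K)
  set K' : Submodule k V := K ⊓ d with hK'
  have hdisj : Disjoint (LinearMap.range f) K' := by
    rw [disjoint_iff]
    calc LinearMap.range f ⊓ (K ⊓ d) = (LinearMap.range f ⊓ K) ⊓ d := by rw [inf_assoc]
      _ = ⊥ := disjoint_iff.mp hd.1
  have hcodisj : Codisjoint (LinearMap.range f) K' := by
    rw [codisjoint_iff_le_sup]
    have hKeq : K ⊓ d ⊔ (LinearMap.range f ⊓ K) = K := by
      rw [inf_sup_assoc_of_le _ inf_le_right, sup_comm, hd.2.eq_top, inf_top_eq]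
    calc (⊤ : Submodule k V) = LinearMap.range f ⊔ K := h.symm
      _ = LinearMap.range f ⊔ (K ⊓ d ⊔ (LinearMap.range f ⊓ K)) := by rw [hKeq]
      _ ≤ LinearMap.range f ⊔ K' :=
          sup_le le_sup_left (sup_le le_sup_right (inf_le_left.trans le_sup_left))
  have hcompl : IsCompl (LinearMap.range f) K' := ⟨hdisj, hcodisj⟩
  obtain ⟨W, hW⟩ := Submodule.exists_isCompl (LinearMap.ker f)
  have hfr1 : Module.finrank k (LinearMap.range f) + Module.finrank k (LinearMap.ker f)
      = Module.finrank k V := LinearMap.finrank_range_add_finrank_ker f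
  have hfr2 : Module.finrank k (LinearMap.range f) + Module.finrank k K'
      = Module.finrank k V := Submodule.finrank_add_eq_of_isCompl hcompl
  have hfr : Module.finrank k (LinearMap.ker f) = Module.finrank k K' := by omega
  let σ : (LinearMap.ker f) ≃ₗ[k] K' := LinearEquiv.ofFinrankEq _ _ hfr
  let δ : V →ₗ[k] V :=
    K'.subtype ∘ₗ σ.toLinearMap ∘ₗ (LinearMap.ker f).linearProjOfIsCompl W hW
  have hδK' : ∀ x, δ x ∈ K' := fun x => (σ _).2
  have hinj : Function.Injective (f + δ) := by
    rw [← LinearMap.ker_eq_bot, eq_bot_iff]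
    intro x hx
    have hx0 : f x + δ x = 0 := hx
    have h1 : f x ∈ LinearMap.range f ⊓ K' := by
      refine ⟨LinearMap.mem_range_self f x, ?_⟩
      have hfx : f x = -δ x := by rw [eq_neg_iff_add_eq_zero]; exact hx0
      rw [hfx]; exact K'.neg_mem (hδK' x)
    have hfx0 : f x = 0 := by
      rw [disjoint_iff] at hdisj; rw [hdisj] at h1; exact h1
    have hxker : x ∈ LinearMap.ker f := hfx0
    have hδx0 : δ x = 0 := by
      have := hx0; rw [hfx0, zero_add] at this; exact this
    have hproj : (LinearMap.ker f).linearProjOfIsCompl W hW x = ⟨x, hxker⟩ :=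
      Submodule.linearProjOfIsCompl_apply_left hW ⟨x, hxker⟩
    have hδx : δ x = (σ ⟨x, hxker⟩ : V) := by
      show K'.subtype (σ ((LinearMap.ker f).linearProjOfIsCompl W hW x)) = _
      rw [hproj]; rfl
    have : σ ⟨x, hxker⟩ = 0 := by
      apply Subtype.ext; rw [← hδx]; exact hδx0
    have : (⟨x, hxker⟩ : LinearMap.ker f) = 0 := σ.injective (by simp [this])
    simpa using congrArg Subtype.val this
  refine ⟨δ, ?_, hinj, (LinearMap.injective_iff_surjective).mp hinj⟩
  rintro _ ⟨x, rfl⟩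
  exact (hδK' x).1

/-- Let `R` be a Noetherian local ring, `m, n` positive integers, and
`N₁, N₂` submodules of `R^m`. Then `R^m/N₁ ≅ R^m/N₂` as `R`-modules if and only if
there exists `g ∈ GL_m(R)` with `g·N₁ = N₂`. -/
theorem stmt_3 (R : Type*) [CommRing R] [IsNoetherianRing R] [IsLocalRing R]
    (m n : ℕ) (hm : 0 < m) (hn : 0 < n)
    (N₁ N₂ : Submodule R (Fin m → R)) :
    Nonempty (((Fin m → R) ⧸ N₁) ≃ₗ[R] ((Fin m → R) ⧸ N₂)) ↔
      ∃ g : Matrix.GeneralLinearGroup (Fin m) R,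
        N₁.map ((g : Matrix (Fin m) (Fin m) R).mulVecLin) = N₂ := by
  classical
  constructor
  · rintro ⟨e⟩
    set k := IsLocalRing.ResidueField R with hk
    let π : R →+* k := algebraMap R k
    have hπs : Function.Surjective π := IsLocalRing.residue_surjective
    have hπmem : ∀ x : R, π x = 0 ↔ x ∈ IsLocalRing.maximalIdeal R := fun x =>
      Ideal.Quotient.eq_zero_iff_mem
    let ρ : (Fin m → R) →ₗ[R] (Fin m → k) :=
      { toFun := fun x i => π (x i)
        map_add' := by intro x y; ext i; simp [π]
        map_smul' := by intro r x; ext i; simp [π, Algebra.smul_def] }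
    have hρs : Function.Surjective ρ := fun v =>
      ⟨fun i => (hπs (v i)).choose, funext fun i => (hπs (v i)).choose_spec⟩
    have hρsmul : ∀ (r : R) (x : Fin m → R), ρ (r • x) = π r • ρ x := by
      intro r x; ext i; simp [ρ, π, Algebra.smul_def]
    let p : (Fin m → R) →ₗ[R] ((Fin m → R) ⧸ N₂) := e.toLinearMap ∘ₗ N₁.mkQ
    have hps : Function.Surjective p := e.surjective.comp N₁.mkQ_surjective
    obtain ⟨f, hf⟩ := Module.projective_lifting_property N₂.mkQ p N₂.mkQ_surjective
    set A := LinearMap.toMatrix' f with hA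
    have hAf : A.mulVecLin = f := by
      rw [hA, ← Matrix.toLin'_apply', Matrix.toLin'_toMatrix']
    let fbar : (Fin m → k) →ₗ[k] (Fin m → k) := (A.map π).mulVecLin
    have hcomm : ∀ x, fbar (ρ x) = ρ (f x) := by
      intro x; ext i
      show (A.map π *ᵥ (fun j => π (x j))) i = π ((f x) i)
      rw [← hAf]
      exact (RingHom.map_mulVec π A x i).symm
    let K : Submodule k (Fin m → k) :=
      { carrier := ρ '' (N₂ : Set (Fin m → R))
        add_mem' := by rintro _ _ ⟨a, ha, rfl⟩ ⟨b, hb, rfl⟩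
                       exact ⟨a + b, N₂.add_mem ha hb, map_add ρ a b⟩
        zero_mem' := ⟨0, N₂.zero_mem, map_zero ρ⟩
        smul_mem' := by rintro c _ ⟨a, ha, rfl⟩
                        obtain ⟨r, rfl⟩ := hπs c
                        exact ⟨r • a, N₂.smul_mem r ha, hρsmul r a⟩ }
    have hsup : LinearMap.range fbar ⊔ K = ⊤ := by
      rw [eq_top_iff]; rintro v -
      obtain ⟨x, rfl⟩ := hρs v
      obtain ⟨y, hy⟩ := hps (N₂.mkQ x)
      have hxf : x - f y ∈ N₂ := by
        rw [← Submodule.ker_mkQ N₂, LinearMap.mem_ker, map_sub]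
        have : N₂.mkQ (f y) = p y := by rw [← hf]; rfl
        rw [this, hy, sub_self]
      refine Submodule.mem_sup.2 ⟨fbar (ρ y), ⟨ρ y, rfl⟩, ρ (x - f y), ⟨x - f y, hxf, rfl⟩, ?_⟩
      rw [hcomm, ← map_add]
      congr 1
      abel
    obtain ⟨δbar, hδbarK, hbij⟩ := field_correction fbar K hsup
    have hlift : ∀ j : Fin m, ∃ nj, nj ∈ N₂ ∧ ρ nj = δbar (Pi.single j 1) := by
      intro j
      obtain ⟨nj, hnj, hnj2⟩ := hδbarK ⟨Pi.single j 1, rfl⟩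
      exact ⟨nj, hnj, hnj2⟩
    choose nn hnn1 hnn2 using hlift
    set B : Matrix (Fin m) (Fin m) R := Matrix.of (fun i j => nn j i) with hB
    set δ := B.mulVecLin with hδ
    have hδsum : ∀ x, δ x = ∑ j, x j • nn j := by
      intro x; ext i
      simp only [hδ, Matrix.mulVecLin_apply, Matrix.mulVec, dotProduct, hB, Matrix.of_apply,
        Finset.sum_apply, Pi.smul_apply, smul_eq_mul]
      exact Finset.sum_congr rfl fun j _ => mul_comm _ _
    have hδN₂ : ∀ x, δ x ∈ N₂ := fun x => by
      rw [hδsum]; exact Submodule.sum_mem _ fun j _ => N₂.smul_mem _ (hnn1 j)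
    have hBred : ((B.map π).mulVecLin : (Fin m → k) →ₗ[k] (Fin m → k)) = δbar := by
      apply Module.Basis.ext (Pi.basisFun k (Fin m))
      intro j
      rw [Pi.basisFun_apply, ← hnn2 j]
      ext i
      simp [Matrix.mulVecLin_apply, Matrix.mulVec_single, hB, ρ]
    set C := A + B with hC
    have hCred : ((C.map π).mulVecLin : (Fin m → k) →ₗ[k] (Fin m → k)) = fbar + δbar := by
      have : C.map π = A.map π + B.map π := by ext i j; simp [Matrix.map_apply, hC]
      rw [this, Matrix.mulVecLin_add, hBred]
    have hCbij : Function.Bijective ((C.map π).mulVecLin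
        : (Fin m → k) →ₗ[k] (Fin m → k)) := by rw [hCred]; exact hbij
    have hCunit : IsUnit (C.map π) := by
      apply Matrix.mulVec_injective_iff_isUnit.mp
      intro x y hxy
      exact hCbij.1 hxy
    have hdetk : IsUnit (π C.det) := by
      rw [RingHom.map_det]
      exact (Matrix.isUnit_iff_isUnit_det _).mp hCunit
    have hdet : IsUnit C.det := by
      rw [← IsLocalRing.notMem_maximalIdeal]
      intro hmem
      rw [(hπmem C.det).mpr hmem] at hdetk
      exact not_isUnit_zero hdetk
    have hCu : IsUnit C := (Matrix.isUnit_iff_isUnit_det C).mpr hdet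
    refine ⟨hCu.unit, ?_⟩
    have hgC : ((hCu.unit : Matrix (Fin m) (Fin m) R)) = C := hCu.unit_spec
    rw [hgC]
    have hCfδ : C.mulVecLin = f + δ := by
      rw [hC, Matrix.mulVecLin_add, hAf, hδ]
    have hqC : N₂.mkQ ∘ₗ C.mulVecLin = p := by
      rw [hCfδ]
      refine LinearMap.ext fun x => ?_
      show N₂.mkQ (f x + δ x) = p x
      have h0 : N₂.mkQ (δ x) = 0 := (Submodule.Quotient.mk_eq_zero N₂).mpr (hδN₂ x)
      have h1 : N₂.mkQ (f x) = p x := by rw [← hf]; rfl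
      rw [map_add, h0, add_zero, h1]
    have hkerp : LinearMap.ker p = N₁ := by
      show LinearMap.ker (e.toLinearMap ∘ₗ N₁.mkQ) = N₁
      rw [LinearMap.ker_comp, LinearEquiv.ker, Submodule.comap_bot, Submodule.ker_mkQ]
    have hcomap : Submodule.comap C.mulVecLin N₂ = N₁ := by
      rw [← Submodule.ker_mkQ N₂, ← LinearMap.ker_comp, hqC, hkerp]
    have hsurjC : Function.Surjective C.mulVecLin := by
      intro y
      refine ⟨(↑hCu.unit⁻¹ : Matrix (Fin m) (Fin m) R).mulVecLin y, ?_⟩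
      have : C.mulVecLin ∘ₗ (↑hCu.unit⁻¹ : Matrix (Fin m) (Fin m) R).mulVecLin
          = LinearMap.id := by
        rw [← Matrix.mulVecLin_mul, hCu.mul_val_inv, Matrix.mulVecLin_one]
      exact congrFun (congrArg (fun (F : _ →ₗ[R] _) => (F : (Fin m → R) → (Fin m → R))) this) y
    rw [← hcomap]
    exact Submodule.map_comap_eq_of_surjective hsurjC N₂
  · rintro ⟨g, hg⟩
    refine ⟨Submodule.Quotient.equiv N₁ N₂ (LinearEquiv.ofLinear
      ((g : Matrix (Fin m) (Fin m) R).mulVecLin)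
      ((↑g⁻¹ : Matrix (Fin m) (Fin m) R).mulVecLin)
      (by rw [← Matrix.mulVecLin_mul, Units.mul_inv, Matrix.mulVecLin_one])
      (by rw [← Matrix.mulVecLin_mul, Units.inv_mul, Matrix.mulVecLin_one])) ?_⟩
    simpa using hg
end

section
/- Let R be a Noetherian local ring and A, B two m×n matrices over R. Then cok(A) ≅ cok(B) as R-modules if and only if there exist g ∈ GL_m(R) and g' ∈ GL_n(R) with g·A·g' = B. -/
/-!
Over a local ring `R` with residue field `k`, any two surjections `f g : R^ι → M` differ by an
automorphism of `R^ι`. Lift `g` through `f` to some `X`; over `k` the two surjections of `k^ι`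
onto `k^ι / W`, where `W` is the image of `ker f`, given by the quotient map and by it after `X̄`,
differ by an automorphism `α`. Correcting `X` by a map into `ker f` whose reduction is `α - X̄`
gives a lift of `g` through `f` that reduces to `α`, hence is invertible.

Given `cok A ≃ cok B`, applying this to the two surjections `R^m → cok B` gives `g ∈ GL_m(R)`
with `g · im A = im B`, and applying it to the two surjections `R^n → im B` given by `g A` and `B`
gives `g'` with `g A g' = B`.
-/

open Function Submodule LinearMap IsLocalRing Matrix

theorem exists_linearEquiv_comp_eq_of_kerEquiv {R U V : Type*} [Ring R] [AddCommGroup U]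
    [Module R U] [AddCommGroup V] [Module R V] [Module.Projective R V] {f g : U →ₗ[R] V}
    (hf : Surjective f) (hg : Surjective g) (e : ker g ≃ₗ[R] ker f) :
    ∃ α : U ≃ₗ[R] U, f ∘ₗ α = g := by
  obtain ⟨sf, hsf⟩ := f.exists_rightInverse_of_surjective (range_eq_top.2 hf)
  obtain ⟨sg, hsg⟩ := g.exists_rightInverse_of_surjective (range_eq_top.2 hg)
  obtain ⟨Ef, -, hEf⟩ :=
    (exact_subtype_ker_map f).splitSurjectiveEquiv (ker f).injective_subtype ⟨sf, hsf⟩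
  obtain ⟨Eg, -, hEg⟩ :=
    (exact_subtype_ker_map g).splitSurjectiveEquiv (ker g).injective_subtype ⟨sg, hsg⟩
  refine ⟨Eg.trans ((e.prodCongr (.refl R V)).trans Ef.symm), ?_⟩
  ext x
  simp [hEf, hEg]

theorem exists_linearEquiv_comp_eq_of_surjective_of_field {k U V : Type*} [Field k]
    [AddCommGroup U] [Module k U] [FiniteDimensional k U] [AddCommGroup V] [Module k V]
    {f g : U →ₗ[k] V} (hf : Surjective f) (hg : Surjective g) :
    ∃ α : U ≃ₗ[k] U, f ∘ₗ α = g := by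
  have hrank := (finrank_range_add_finrank_ker f).trans (finrank_range_add_finrank_ker g).symm
  rw [range_eq_top.2 hf, range_eq_top.2 hg, add_right_inj] at hrank
  exact exists_linearEquiv_comp_eq_of_kerEquiv hf hg (.ofFinrankEq _ _ hrank.symm)

theorem Submodule.map_eq_of_mkQ_comp_eq {R M M' : Type*} [Ring R] [AddCommGroup M] [Module R M]
    [AddCommGroup M'] [Module R M'] {N : Submodule R M} {N' : Submodule R M'} {u : M →ₗ[R] M'}
    (hu : Surjective u) (φ : (M ⧸ N) ≃ₗ[R] M' ⧸ N') (h : N'.mkQ ∘ₗ u = φ ∘ₗ N.mkQ) :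
    N.map u = N' := by
  have : N = N'.comap u := by
    rw [← ker_mkQ N', ← ker_comp, h, LinearEquiv.ker_comp, ker_mkQ]
  rw [this, map_comap_eq_of_surjective hu]

theorem Module.exists_comp_subtype_comp_eq_of_range_le_map {R P M M' : Type*} [Ring R]
    [AddCommGroup P] [Module R P] [Module.Projective R P] [AddCommGroup M] [Module R M]
    [AddCommGroup M'] [Module R M'] (N : Submodule R M) (u : M →ₗ[R] M') {v : P →ₗ[R] M'}
    (h : range v ≤ N.map u) : ∃ Z : P →ₗ[R] N, u ∘ₗ N.subtype ∘ₗ Z = v := by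
  rw [← range_subtype N, ← range_comp] at h
  obtain ⟨Z, hZ⟩ := Module.projective_lifting_property (u ∘ₗ N.subtype).rangeRestrict
    (v.codRestrict _ fun p => h (mem_range_self v p)) (u ∘ₗ N.subtype).surjective_rangeRestrict
  exact ⟨Z, LinearMap.ext fun p => congrArg Subtype.val (LinearMap.congr_fun hZ p)⟩

namespace IsLocalRing

variable {R : Type*} [CommRing R] [IsLocalRing R] {ι : Type*}

variable (R ι) in
noncomputable def residueVec : (ι → R) →ₗ[R] (ι → ResidueField R) :=
  (Algebra.linearMap R (ResidueField R)).compLeft ι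

@[simp]
theorem residueVec_apply (c : ι → R) (i : ι) : residueVec R ι c i = residue R (c i) := rfl

theorem residueVec_surjective : Surjective (residueVec R ι) := by
  intro u
  choose c hc using fun i => residue_surjective (u i)
  exact ⟨c, funext hc⟩

variable [Fintype ι]

theorem residueVec_mulVec (X : Matrix ι ι R) (c : ι → R) :
    residueVec R ι (X *ᵥ c) = X.map (residue R) *ᵥ residueVec R ι c :=
  funext (RingHom.map_mulVec (residue R) X c)

variable [DecidableEq ι]

theorem isUnit_toMatrix'_of_residueVec_eq {G : (ι → R) →ₗ[R] (ι → R)}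
    {α : (ι → ResidueField R) ≃ₗ[ResidueField R] (ι → ResidueField R)}
    (h : ∀ c, residueVec R ι (G c) = α (residueVec R ι c)) : IsUnit (toMatrix' G) := by
  have hmap : (toMatrix' G).map (residue R) = toMatrix' (α : (ι → _) →ₗ[_] (ι → _)) := by
    ext i j
    have hsingle : residueVec R ι (Pi.single j 1) = Pi.single j 1 := by
      ext i; by_cases hij : i = j <;> simp [hij]
    simpa [toMatrix'_apply, hsingle] using congrFun (h (Pi.single j 1)) i
  rw [Matrix.isUnit_iff_isUnit_det]
  refine IsUnit.of_map (residue R) _ ?_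
  rw [RingHom.map_det, RingHom.mapMatrix_apply, hmap, det_toMatrix']
  exact α.isUnit_det'

variable {M : Type*} [AddCommGroup M] [Module R M]

theorem exists_comp_mulVecLin_eq_of_surjective {f g : (ι → R) →ₗ[R] M} (hf : Surjective f)
    (hg : Surjective g) : ∃ G : GL ι R, f ∘ₗ (G : Matrix ι ι R).mulVecLin = g := by
  obtain ⟨X, hX⟩ := Module.projective_lifting_property f g hf
  set Xbar := (toMatrix' X).map (residue R)
  have hXbar : ∀ c, Xbar *ᵥ residueVec R ι c = residueVec R ι (X c) := fun c => by
    rw [← residueVec_mulVec, toMatrix'_mulVec]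
  set W : Submodule (ResidueField R) (ι → ResidueField R) := span _ (residueVec R ι '' ker f)
  have hW : W.restrictScalars R = (ker f).map (residueVec R ι) := by
    rw [restrictScalars_span R _ residue_surjective, ← Submodule.map_span, span_eq]
  have hsurj : Surjective (W.mkQ ∘ₗ Xbar.mulVecLin) := by
    refine (W.mkQ_surjective.comp residueVec_surjective).forall.2 fun c => ?_
    obtain ⟨d, hd⟩ := hg (f c)
    refine ⟨residueVec R ι d, (Submodule.Quotient.eq W).2 (subset_span ⟨X d - c, ?_, ?_⟩)⟩
    · simp [mem_ker, ← hd, ← LinearMap.comp_apply, hX]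
    · simp [hXbar]
  obtain ⟨α, hα⟩ := exists_linearEquiv_comp_eq_of_surjective_of_field W.mkQ_surjective hsurj
  have hαX : range (((α : _ →ₗ[ResidueField R] _) - Xbar.mulVecLin).restrictScalars R ∘ₗ
      residueVec R ι) ≤ (ker f).map (residueVec R ι) := by
    rintro _ ⟨c, rfl⟩
    exact hW ▸ (Submodule.Quotient.eq W).1 (LinearMap.congr_fun hα (residueVec R ι c))
  obtain ⟨Z, hZ⟩ := Module.exists_comp_subtype_comp_eq_of_range_le_map _ _ hαX
  set G := X + (ker f).subtype ∘ₗ Z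
  have hfG : f ∘ₗ G = g := by
    refine LinearMap.ext fun c => ?_
    simp [G, ← hX, mem_ker.1 (Z c).2]
  have hG : ∀ c, residueVec R ι (G c) = α (residueVec R ι c) := by
    intro c
    have hZc : residueVec R ι (Z c) = (α - Xbar.mulVecLin) (residueVec R ι c) :=
      LinearMap.congr_fun hZ c
    simp [G, hZc, ← hXbar]
  refine ⟨(isUnit_toMatrix'_of_residueVec_eq hG).unit, ?_⟩
  simpa [← Matrix.toLin'_apply'] using hfG

theorem exists_comp_mulVecLin_eq_of_range_eq {f g : (ι → R) →ₗ[R] M} (h : range f = range g) :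
    ∃ G : GL ι R, f ∘ₗ (G : Matrix ι ι R).mulVecLin = g := by
  let g' : (ι → R) →ₗ[R] range f := (LinearEquiv.ofEq _ _ h.symm).toLinearMap ∘ₗ g.rangeRestrict
  obtain ⟨G, hG⟩ := exists_comp_mulVecLin_eq_of_surjective (g := g') f.surjective_rangeRestrict
    ((LinearEquiv.ofEq _ _ h.symm).surjective.comp g.surjective_rangeRestrict)
  exact ⟨G, LinearMap.ext fun c => congrArg Subtype.val (LinearMap.congr_fun hG c)⟩

end IsLocalRing

theorem stmt_4_general (R : Type*) [CommRing R] [IsLocalRing R]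
    (m n : ℕ) (A B : Matrix (Fin m) (Fin n) R) :
    Nonempty (((Fin m → R) ⧸ LinearMap.range A.mulVecLin) ≃ₗ[R]
        ((Fin m → R) ⧸ LinearMap.range B.mulVecLin)) ↔
      ∃ (g : Matrix.GeneralLinearGroup (Fin m) R)
        (g' : Matrix.GeneralLinearGroup (Fin n) R),
        (g : Matrix (Fin m) (Fin m) R) * A * (g' : Matrix (Fin n) (Fin n) R) = B := by
  constructor
  · rintro ⟨φ⟩
    obtain ⟨g, hg⟩ := exists_comp_mulVecLin_eq_of_range_eq (f := (range B.mulVecLin).mkQ)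
      (g := φ.toLinearMap ∘ₗ (range A.mulVecLin).mkQ)
      (by rw [range_mkQ, range_comp_of_range_eq_top _ (range_mkQ _), LinearEquiv.range])
    have hrange : range ((g : Matrix (Fin m) (Fin m) R) * A).mulVecLin = range B.mulVecLin := by
      rw [mulVecLin_mul, range_comp]
      exact map_eq_of_mkQ_comp_eq (mulVec_surjective_iff_isUnit.2 g.isUnit) φ hg
    obtain ⟨g', hg'⟩ := exists_comp_mulVecLin_eq_of_range_eq hrange
    exact ⟨g, g', toLin'.injective (by simpa [toLin'_apply', mulVecLin_mul] using hg')⟩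
  · rintro ⟨g, g', rfl⟩
    refine ⟨Submodule.Quotient.equiv _ _ (GeneralLinearGroup.toLin g).toLinearEquiv ?_⟩
    rw [mulVecLin_mul, range_comp_of_range_eq_top _
      (range_eq_top.2 (mulVec_surjective_iff_isUnit.2 g'.isUnit)), mulVecLin_mul, range_comp]
    rfl

/-- Let `R` be a Noetherian local ring and `A, B` two `m×n` matrices
over `R`. Then `cok(A) ≅ cok(B)` as `R`-modules if and only if there exist
`g ∈ GL_m(R)` and `g' ∈ GL_n(R)` with `g·A·g' = B`. Here
`cok(A) = R^m / A·R^n`. -/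
theorem stmt_4 (R : Type*) [CommRing R] [IsNoetherianRing R] [IsLocalRing R]
    (m n : ℕ) (A B : Matrix (Fin m) (Fin n) R) :
    Nonempty (((Fin m → R) ⧸ LinearMap.range A.mulVecLin) ≃ₗ[R]
        ((Fin m → R) ⧸ LinearMap.range B.mulVecLin)) ↔
      ∃ (g : Matrix.GeneralLinearGroup (Fin m) R)
        (g' : Matrix.GeneralLinearGroup (Fin n) R),
        (g : Matrix (Fin m) (Fin m) R) * A * (g' : Matrix (Fin n) (Fin n) R) = B :=
  stmt_4_general R m n A B
end

section
/- Let (R, m) be a Noetherian local ring, b ⊆ R an ideal, and set a = m·b with a ⊆ m. Let G be a finitely generated R-module with b·G = 0. Then β₁^{R/a}(G) = β₁^R(G). -/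
/-!
Surjections `(R/a)ⁿ → G` correspond to surjections `Rⁿ → G` through reduction modulo `a`, and
the kernel of the former is the image of the kernel `K` of the latter. Since `b` kills `G`, we
have `bRⁿ ⊆ K`, so the kernel `aRⁿ = m(bRⁿ)` of the reduction lies in `mK`. By Nakayama's lemma
`K` and its image then need the same number of generators.
-/

/-- The minimal number of generators of a module; over a local ring this is the zeroth
Betti number `β₀(G) = dim_κ(G/mG)` of a minimal free resolution. -/
noncomputable def minGens (R M : Type*) [Semiring R] [AddCommMonoid M] [Module R M] : ℕ :=
  sInf {k | ∃ s : Finset M, s.card = k ∧ Submodule.span R (s : Set M) = ⊤}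

/-- The first Betti number of a module over a local ring: the minimal number of
generators of the kernel of a (minimal) surjection `R^{β₀(G)} → G`. -/
noncomputable def beta1 (R M : Type*) [CommRing R] [AddCommGroup M] [Module R M] : ℕ :=
  sInf {k | ∃ F : (Fin (minGens R M) → R) →ₗ[R] M,
    Function.Surjective F ∧ minGens R (LinearMap.ker F) = k}

open Submodule IsLocalRing

theorem minGens_eq_spanFinrank_top (R M : Type*) [Semiring R] [AddCommMonoid M] [Module R M] :
    minGens R M = (⊤ : Submodule R M).spanFinrank := by
  rw [spanFinrank_eq_iInf, minGens, iInf]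
  congr 1
  ext k
  simp [eq_comm, and_comm]

theorem minGens_congr {R M N : Type*} [Semiring R] [AddCommMonoid M] [Module R M]
    [AddCommMonoid N] [Module R N] (e : M ≃ₗ[R] N) : minGens R M = minGens R N := by
  rw [minGens_eq_spanFinrank_top, minGens_eq_spanFinrank_top,
    ← spanFinrank_map_eq_of_injective e.toLinearMap e.injective, Submodule.map_top,
    LinearEquiv.range]

section restrictScalars

variable (R : Type*) {S M : Type*} [CommRing R] [CommRing S] [Algebra R S]
  [AddCommGroup M] [Module R M] [Module S M] [IsScalarTower R S M]

theorem spanFinrank_restrictScalars (hsur : Function.Surjective (algebraMap R S))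
    (p : Submodule S M) : (p.restrictScalars R).spanFinrank = p.spanFinrank := by
  have hspan (s : Finset M) :
      span R (s : Set M) = p.restrictScalars R ↔ span S (s : Set M) = p := by
    rw [← restrictScalars_span R S hsur, restrictScalars_inj]
  rw [spanFinrank_eq_iInf, spanFinrank_eq_iInf]
  exact (Equiv.subtypeEquivRight hspan).iInf_congr fun _ => rfl

theorem minGens_restrictScalars (hsur : Function.Surjective (algebraMap R S)) :
    minGens S M = minGens R M := by
  rw [minGens_eq_spanFinrank_top, minGens_eq_spanFinrank_top, ← restrictScalars_top R S M,
    spanFinrank_restrictScalars R hsur]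

end restrictScalars

theorem spanFinrank_map_eq_of_ker_le_maximalIdeal_smul {R M N : Type*} [CommRing R]
    [IsLocalRing R] [AddCommGroup M] [Module R M] [AddCommGroup N] [Module R N]
    (f : M →ₗ[R] N) {K : Submodule R M} (hK : K.FG)
    (hker : LinearMap.ker f ≤ maximalIdeal R • K) :
    (K.map f).spanFinrank = K.spanFinrank := by
  refine (spanFinrank_map_le_of_fg f hK).antisymm ?_
  obtain ⟨s, hcard, hspan⟩ := (hK.map f).exists_span_finset_card_eq_spanFinrank
  have hsurj : Set.SurjOn f K s := by
    change (s : Set N) ⊆ f '' K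
    rw [← map_coe, ← hspan]
    exact subset_span
  obtain ⟨t, htK, hinj, hts⟩ := hsurj.exists_subset_injOn_image_eq
  have ht : t.Finite := Set.Finite.of_finite_image (hts ▸ s.finite_toSet) hinj
  have hle : K ≤ span R t ⊔ maximalIdeal R • K := by
    intro x hx
    obtain ⟨y, hy, hxy⟩ : f x ∈ (span R t).map f := by
      rw [map_span, hts, hspan]
      exact mem_map_of_mem hx
    refine mem_sup.2 ⟨y, hy, x - y, hker ?_, add_sub_cancel _ _⟩
    rw [LinearMap.mem_ker, map_sub, hxy, sub_self]
  have hKt : span R t = K := le_antisymm (span_le.2 htK)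
    (le_of_le_smul_of_le_jacobson_bot hK (maximalIdeal_le_jacobson ⊥) hle)
  calc K.spanFinrank = (span R t).spanFinrank := by rw [hKt]
    _ ≤ t.ncard := spanFinrank_span_le_ncard_of_finite ht
    _ = s.card := by rw [← hinj.ncard_image, hts, Set.ncard_coe_finset]
    _ = (K.map f).spanFinrank := hcard

def syzygyMinGens (R M : Type*) [CommRing R] [AddCommGroup M] [Module R M] (n : ℕ) : Set ℕ :=
  {k | ∃ F : (Fin n → R) →ₗ[R] M, Function.Surjective F ∧ minGens R (LinearMap.ker F) = k}

theorem beta1_eq_sInf_syzygyMinGens (R M : Type*) [CommRing R] [AddCommGroup M] [Module R M] :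
    beta1 R M = sInf (syzygyMinGens R M (minGens R M)) := rfl

section congr

variable {R M N : Type*} [CommRing R] [AddCommGroup M] [Module R M] [AddCommGroup N]
  [Module R N]

theorem syzygyMinGens_congr (e : M ≃ₗ[R] N) (n : ℕ) :
    syzygyMinGens R M n = syzygyMinGens R N n := by
  ext k
  constructor
  · rintro ⟨F, hF, rfl⟩
    exact ⟨e.toLinearMap ∘ₗ F, e.surjective.comp hF, by rw [LinearEquiv.ker_comp]⟩
  · rintro ⟨F, hF, rfl⟩
    exact ⟨e.symm.toLinearMap ∘ₗ F, e.symm.surjective.comp hF, by rw [LinearEquiv.ker_comp]⟩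

theorem beta1_congr (e : M ≃ₗ[R] N) : beta1 R M = beta1 R N := by
  rw [beta1_eq_sInf_syzygyMinGens, beta1_eq_sInf_syzygyMinGens, minGens_congr e,
    syzygyMinGens_congr e]

end congr

theorem mem_ideal_smul_top_pi {R ι : Type*} [CommRing R] [Finite ι] {I : Ideal R}
    {x : ι → R} (hx : ∀ i, x i ∈ I) : x ∈ I • (⊤ : Submodule R (ι → R)) := by
  classical
  have := Fintype.ofFinite ι
  rw [pi_eq_sum_univ x]
  exact sum_mem fun i _ => smul_mem_smul (hx i) trivial

theorem ker_compLeft_le_maximalIdeal_smul_ker {R M ι : Type*} [CommRing R] [IsLocalRing R]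
    [AddCommGroup M] [Module R M] [Finite ι] {a b : Ideal R}
    (hab : a ≤ maximalIdeal R * b) (hb : b ≤ Module.annihilator R M) (F : (ι → R) →ₗ[R] M) :
    LinearMap.ker ((Algebra.linearMap R (R ⧸ a)).compLeft ι) ≤
      maximalIdeal R • LinearMap.ker F := by
  intro x hx
  have hxa : ∀ i, x i ∈ a := fun i => Ideal.Quotient.eq_zero_iff_mem.1 (congrFun hx i)
  have hbF : b • ⊤ ≤ LinearMap.ker F := smul_le.2 fun r hr y _ => by
    rw [LinearMap.mem_ker, map_smul, Module.mem_annihilator.1 (hb hr)]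
  have hx' := smul_mono_left hab (mem_ideal_smul_top_pi hxa)
  rw [mul_smul] at hx'
  exact smul_mono_right _ hbF hx'

section quotient

variable {R M : Type*} [CommRing R] [IsNoetherianRing R] [IsLocalRing R] [AddCommGroup M]
  [Module R M] {a b : Ideal R} [Module (R ⧸ a) M] [IsScalarTower R (R ⧸ a) M]

theorem minGens_ker_eq_of_restrictScalars_comp_eq (hab : a ≤ maximalIdeal R * b)
    (hb : b ≤ Module.annihilator R M) {ι : Type*} [Finite ι] {F : (ι → R) →ₗ[R] M}
    {Fb : (ι → R ⧸ a) →ₗ[R ⧸ a] M}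
    (hF : Fb.restrictScalars R ∘ₗ (Algebra.linearMap R (R ⧸ a)).compLeft ι = F) :
    minGens (R ⧸ a) (LinearMap.ker Fb) = minGens R (LinearMap.ker F) := by
  have hker : (LinearMap.ker Fb).restrictScalars R =
      (LinearMap.ker F).map ((Algebra.linearMap R (R ⧸ a)).compLeft ι) := by
    rw [← hF, LinearMap.ker_comp,
      map_comap_eq_of_surjective Ideal.Quotient.mk_surjective.comp_left,
      LinearMap.ker_restrictScalars]
  rw [minGens_eq_spanFinrank_top, spanFinrank_top, minGens_eq_spanFinrank_top, spanFinrank_top,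
    ← spanFinrank_restrictScalars R Ideal.Quotient.mk_surjective, hker,
    spanFinrank_map_eq_of_ker_le_maximalIdeal_smul _ (IsNoetherian.noetherian _)
      (ker_compLeft_le_maximalIdeal_smul_ker hab hb F)]

theorem syzygyMinGens_quotient (hab : a ≤ maximalIdeal R * b)
    (hb : b ≤ Module.annihilator R M) (n : ℕ) :
    syzygyMinGens (R ⧸ a) M n = syzygyMinGens R M n := by
  set q := (Algebra.linearMap R (R ⧸ a)).compLeft (Fin n)
  ext k
  constructor
  · rintro ⟨Fb, hFb, rfl⟩
    exact ⟨Fb.restrictScalars R ∘ₗ q, hFb.comp Ideal.Quotient.mk_surjective.comp_left,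
      (minGens_ker_eq_of_restrictScalars_comp_eq hab hb rfl).symm⟩
  · rintro ⟨F, hF, rfl⟩
    set Fb := Fintype.linearCombination (R ⧸ a) fun i => F (Pi.single i 1)
    have hq (i : Fin n) : q (Pi.single i 1) = Pi.single i 1 := by
      funext j
      exact Pi.apply_single (fun _ => Algebra.linearMap R (R ⧸ a)) (fun _ => map_zero _) i 1 j
    have hFb : Fb.restrictScalars R ∘ₗ q = F := by
      ext i
      simp [Fb, hq]
    refine ⟨Fb, ?_, minGens_ker_eq_of_restrictScalars_comp_eq hab hb hFb⟩
    rw [← hFb] at hF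
    exact Function.Surjective.of_comp (g := q) hF

theorem beta1_quotient (hab : a ≤ maximalIdeal R * b) (hb : b ≤ Module.annihilator R M) :
    beta1 (R ⧸ a) M = beta1 R M := by
  rw [beta1_eq_sInf_syzygyMinGens, beta1_eq_sInf_syzygyMinGens,
    minGens_restrictScalars R Ideal.Quotient.mk_surjective, syzygyMinGens_quotient hab hb]

end quotient

theorem stmt_7_general (R : Type*) [CommRing R] [IsNoetherianRing R] [IsLocalRing R]
    (b a : Ideal R) (ha : a = IsLocalRing.maximalIdeal R * b)
    (G : Type*) [AddCommGroup G] [Module R G]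
    (hbG : ∀ x ∈ b, ∀ g : G, x • g = (0 : G)) :
    beta1 (R ⧸ a) (G ⧸ (a • ⊤ : Submodule R G)) = beta1 R G := by
  have hb : b ≤ Module.annihilator R G := fun x hx => Module.mem_annihilator.2 (hbG x hx)
  have haG : (a • ⊤ : Submodule R G) = ⊥ := by
    rw [← le_annihilator_iff, annihilator_top]
    exact (ha ▸ Ideal.mul_le_right).trans hb
  rw [beta1_quotient ha.le
      (hb.trans (LinearMap.annihilator_le_of_surjective _ (mkQ_surjective _))),
    beta1_congr (quotEquivOfEqBot _ haG)]

/-- Let `(R, m)` be a Noetherian local ring, `b ⊆ R` an ideal, and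
set `a = m·b` with `a ⊆ m`. Let `G` be a finitely generated `R`-module with `b·G = 0`.
Then `β₁^{R/a}(G) = β₁^R(G)`. (Since `aG = 0`, the natural `R/a`-module `G/aG` is
canonically `G` itself.) -/
theorem stmt_7 (R : Type*) [CommRing R] [IsNoetherianRing R] [IsLocalRing R]
    (b a : Ideal R) (ha : a = IsLocalRing.maximalIdeal R * b)
    (ha' : a ≤ IsLocalRing.maximalIdeal R)
    (G : Type*) [AddCommGroup G] [Module R G] [Module.Finite R G]
    (hbG : ∀ x ∈ b, ∀ g : G, x • g = (0 : G)) :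
    beta1 (R ⧸ a) (G ⧸ (a • ⊤ : Submodule R G)) = beta1 R G :=
  stmt_7_general R b a ha G hbG
end

section
/- Let p be a prime and P(t) ∈ ℤ_p[t] a monic polynomial whose reduction modulo p equals Q̄(t)^m for some monic irreducible Q̄(t) ∈ 𝔽_p[t] and m ≥ 1. Then R = ℤ_p[t]/(P(t)) is a local ring, and every finite-length R-module G satisfies β₁^R(G) ≥ β₀^R(G). -/
open Polynomial IsLocalRing
open scoped Matrix

section Betti

variable {R : Type*} [CommRing R]

theorem exists_surjective_fin_minGens (M : Type*) [AddCommGroup M] [Module R M]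
    [Module.Finite R M] : ∃ f : (Fin (minGens R M) → R) →ₗ[R] M, Function.Surjective f := by
  obtain ⟨s₀, hs₀⟩ := Module.Finite.fg_top (R := R) (M := M)
  obtain ⟨s, hcard, hs⟩ : minGens R M ∈
      {k | ∃ s : Finset M, s.card = k ∧ Submodule.span R (s : Set M) = ⊤} :=
    Nat.sInf_mem ⟨_, s₀, rfl, hs₀⟩
  rw [← hcard]
  refine ⟨Fintype.linearCombination R (Subtype.val ∘ s.equivFin.symm), ?_⟩
  rw [← LinearMap.range_eq_top, Fintype.range_linearCombination, EquivLike.range_comp,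
    Subtype.range_coe_subtype]
  exact hs

theorem exists_surjective_minGens_ker_eq_beta1 (M : Type*) [AddCommGroup M] [Module R M]
    [Module.Finite R M] : ∃ F : (Fin (minGens R M) → R) →ₗ[R] M,
      Function.Surjective F ∧ minGens R (LinearMap.ker F) = beta1 R M := by
  obtain ⟨F, hF⟩ := exists_surjective_fin_minGens (R := R) M
  exact Nat.sInf_mem (s := {k | ∃ F : (Fin (minGens R M) → R) →ₗ[R] M,
    Function.Surjective F ∧ minGens R (LinearMap.ker F) = k}) ⟨_, F, hF, rfl⟩

theorem exists_pow_smul_eq_zero_of_mem_maximalIdeal [IsLocalRing R] {M : Type*}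
    [AddCommGroup M] [Module R M] [IsArtinian R M] {r : R} (hr : r ∈ maximalIdeal R) (x : M) :
    ∃ n : ℕ, r ^ n • x = 0 := by
  obtain ⟨n, ⟨y, hy⟩, hyx⟩ := IsArtinian.exists_pow_succ_smul_dvd r
    (⟨x, Submodule.mem_span_singleton_self x⟩ : R ∙ x)
  obtain ⟨c, rfl⟩ := Submodule.mem_span_singleton.mp hy
  have hyx : r ^ (n + 1) • c • x = r ^ n • x := congrArg Subtype.val hyx
  have hunit : IsUnit (1 - r * c) :=
    isUnit_one_sub_self_of_mem_nonunits _ ((maximalIdeal R).mul_mem_right c hr)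
  refine ⟨n, hunit.smul_left_cancel.mp ?_⟩
  rw [smul_zero, sub_smul, one_smul, sub_eq_zero, smul_smul]
  nth_rewrite 1 [← hyx]
  rw [smul_smul]
  congr 1
  ring

theorem le_of_forall_exists_pow_smul_mem_range {r : R} (hr : ¬IsNilpotent r) {k n : ℕ}
    (ψ : (Fin k → R) →ₗ[R] (Fin n → R)) (hψ : ∀ v, ∃ N : ℕ, r ^ N • v ∈ LinearMap.range ψ) :
    n ≤ k := by
  let S := Localization.Away r
  have : Nontrivial S := by
    rw [← not_subsingleton_iff_nontrivial,
      IsLocalization.subsingleton_iff (M := Submonoid.powers r)]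
    exact hr
  let A := (LinearMap.toMatrix' ψ).map (algebraMap R S)
  refine le_of_fin_surjective S A.mulVecLin ?_
  rw [← LinearMap.range_eq_top, eq_top_iff, ← (Pi.basisFun S (Fin n)).span_eq, Submodule.span_le]
  rintro _ ⟨i, rfl⟩
  obtain ⟨N, v, hv⟩ := hψ (Pi.single i 1)
  obtain ⟨u, hu⟩ := (IsLocalization.Away.algebraMap_isUnit r : IsUnit (algebraMap R S r)).pow N
  refine ⟨(↑u⁻¹ : S) • (algebraMap R S ∘ v), ?_⟩
  have hAv : A *ᵥ (algebraMap R S ∘ v) = algebraMap R S r ^ N • Pi.single i 1 := by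
    funext j
    rw [← RingHom.map_mulVec, LinearMap.toMatrix'_mulVec, hv]
    simp [Pi.single_apply, apply_ite (algebraMap R S)]
  rw [map_smul, Matrix.mulVecLin_apply, hAv, smul_smul, ← hu, Units.inv_mul, one_smul,
    Pi.basisFun_apply]

theorem minGens_le_beta1_of_isArtinian [IsLocalRing R] [IsNoetherianRing R] {r : R}
    (hr : r ∈ maximalIdeal R) (hr' : ¬IsNilpotent r) (G : Type*) [AddCommGroup G] [Module R G]
    [IsArtinian R G] [Module.Finite R G] : minGens R G ≤ beta1 R G := by
  obtain ⟨F, -, hF⟩ := exists_surjective_minGens_ker_eq_beta1 (R := R) G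
  obtain ⟨f, hf⟩ := exists_surjective_fin_minGens (R := R) (LinearMap.ker F)
  rw [← hF]
  refine le_of_forall_exists_pow_smul_mem_range hr' ((LinearMap.ker F).subtype ∘ₗ f) fun v => ?_
  obtain ⟨N, hN⟩ := exists_pow_smul_eq_zero_of_mem_maximalIdeal hr (F v)
  refine ⟨N, ?_⟩
  rw [LinearMap.range_comp, LinearMap.range_eq_top.mpr hf, Submodule.map_top,
    Submodule.range_subtype, LinearMap.mem_ker, map_smul, hN]

end Betti

theorem comap_algebraMap_eq_maximalIdeal {A B : Type*} [CommRing A] [IsLocalRing A] [CommRing B]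
    [Algebra A B] [Algebra.IsIntegral A B] (N : Ideal B) [N.IsMaximal] :
    N.comap (algebraMap A B) = maximalIdeal A :=
  eq_maximalIdeal (Ideal.isMaximal_comap_of_isIntegral_of_isMaximal N)

section ReductionPower

variable {A κ : Type*} [CommRing A] [Field κ] {π : A →+* κ} {P : A[X]} {Q : κ[X]} {m : ℕ}

theorem comap_mk_eq_comap_span_of_map_eq_pow [IsLocalRing A] (hπ : Function.Surjective π)
    (hP : P.Monic) (hQ : Irreducible Q) (hPQ : P.map π = Q ^ m)
    (N : Ideal (A[X] ⧸ Ideal.span {P})) [N.IsMaximal] :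
    N.comap (Ideal.Quotient.mk _) = (Ideal.span {Q}).comap (mapRingHom π) := by
  have : Module.Finite A (A[X] ⧸ Ideal.span {P}) := hP.finite_adjoinRoot
  set L := N.comap (Ideal.Quotient.mk (Ideal.span {P}))
  have hker : RingHom.ker (mapRingHom π) ≤ L := by
    rw [ker_mapRingHom, Ideal.map_le_iff_le_comap,
      eq_maximalIdeal (RingHom.ker_isMaximal_of_surjective π hπ), Ideal.comap_comap]
    exact (comap_algebraMap_eq_maximalIdeal N).ge
  have hsurj : Function.Surjective (mapRingHom π) := map_surjective π hπ
  have hprime : (L.map (mapRingHom π)).IsPrime := Ideal.map_isPrime_of_surjective hsurj hker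
  have hQL : Ideal.span {Q} = L.map (mapRingHom π) := by
    refine (PrincipalIdealRing.isMaximal_of_irreducible hQ).eq_of_le hprime.ne_top ?_
    rw [Ideal.span_singleton_le_iff_mem]
    refine hprime.mem_of_pow_mem m ?_
    rw [← hPQ]
    exact Ideal.mem_map_of_mem _ (Ideal.mem_comap.mpr (by simp))
  rw [hQL, Ideal.comap_map_of_surjective' _ hsurj, sup_eq_left.mpr hker]

theorem Polynomial.Monic.natDegree_pos_of_map_eq_pow (hP : P.Monic) (hQ : Irreducible Q)
    (hm : m ≠ 0) (hPQ : P.map π = Q ^ m) : 0 < P.natDegree := by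
  rw [← hP.natDegree_map π, hPQ, Polynomial.natDegree_pow]
  exact Nat.mul_pos (Nat.pos_of_ne_zero hm) hQ.natDegree_pos

theorem isLocalRing_quotient_span_of_map_eq_pow [IsLocalRing A] (hπ : Function.Surjective π)
    (hP : P.Monic) (hQ : Irreducible Q) (hm : m ≠ 0) (hPQ : P.map π = Q ^ m) :
    IsLocalRing (A[X] ⧸ Ideal.span {P}) := by
  have hQmax := PrincipalIdealRing.isMaximal_of_irreducible hQ
  have hP_le : Ideal.span {P} ≤ (Ideal.span {Q}).comap (mapRingHom π) := by
    rw [Ideal.span_singleton_le_iff_mem, Ideal.mem_comap, coe_mapRingHom, hPQ]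
    exact Ideal.mem_span_singleton.mpr (dvd_pow_self Q hm)
  have := Ideal.Quotient.nontrivial_iff.mpr
    (ne_top_of_le_ne_top (Ideal.comap_ne_top _ hQmax.ne_top) hP_le)
  obtain ⟨N₀, hN₀⟩ := Ideal.exists_maximal (A[X] ⧸ Ideal.span {P})
  refine .of_unique_max_ideal ⟨N₀, hN₀, fun N hN =>
    Ideal.comap_injective_of_surjective _ Ideal.Quotient.mk_surjective ?_⟩
  rw [comap_mk_eq_comap_span_of_map_eq_pow hπ hP hQ hPQ N,
    comap_mk_eq_comap_span_of_map_eq_pow hπ hP hQ hPQ N₀]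

end ReductionPower

theorem stmt_9_general (p : ℕ) [Fact p.Prime]
    (P : Polynomial ℤ_[p]) (hP : P.Monic)
    (Q : Polynomial (ZMod p)) (hQirr : Irreducible Q)
    (m : ℕ) (hm : 1 ≤ m) (hred : P.map PadicInt.toZMod = Q ^ m) :
    IsLocalRing (Polynomial ℤ_[p] ⧸ Ideal.span {P}) ∧
      ∀ (G : Type) [AddCommGroup G] [Module (Polynomial ℤ_[p] ⧸ Ideal.span {P}) G],
        IsFiniteLength (Polynomial ℤ_[p] ⧸ Ideal.span {P}) G →
          minGens (Polynomial ℤ_[p] ⧸ Ideal.span {P}) G ≤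
            beta1 (Polynomial ℤ_[p] ⧸ Ideal.span {P}) G := by
  have hπ : Function.Surjective (PadicInt.toZMod (p := p)) := ZMod.ringHom_surjective _
  have hm₀ : m ≠ 0 := by omega
  have hloc := isLocalRing_quotient_span_of_map_eq_pow hπ hP hQirr hm₀ hred
  refine ⟨hloc, fun G _ _ hG => ?_⟩
  obtain ⟨_, _⟩ := isFiniteLength_iff_isNoetherian_isArtinian.mp hG
  have : Module.Finite ℤ_[p] (Polynomial ℤ_[p] ⧸ Ideal.span {P}) := hP.finite_adjoinRoot
  have hinj : Function.Injective (algebraMap ℤ_[p] (Polynomial ℤ_[p] ⧸ Ideal.span {P})) :=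
    AdjoinRoot.of.injective_of_degree_ne_zero
      (natDegree_pos_iff_degree_pos.mp (hP.natDegree_pos_of_map_eq_pow hQirr hm₀ hred)).ne'
  refine minGens_le_beta1_of_isArtinian (r := (p : Polynomial ℤ_[p] ⧸ Ideal.span {P})) ?_ ?_ G
  · rw [← map_natCast (algebraMap ℤ_[p] _), ← Ideal.mem_comap, comap_algebraMap_eq_maximalIdeal]
    exact PadicInt.p_nonunit
  · rw [← map_natCast (algebraMap ℤ_[p] _), IsNilpotent.map_iff hinj, isNilpotent_iff_eq_zero]
    exact_mod_cast (Fact.out : p.Prime).ne_zero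

/-- Let `p` be a prime and `P(t) ∈ ℤ_p[t]` a monic polynomial whose
reduction modulo `p` equals `Q̄(t)^m` for some monic irreducible `Q̄(t) ∈ 𝔽_p[t]` and
`m ≥ 1`. Then `R = ℤ_p[t]/(P(t))` is a local ring, and every finite-length `R`-module
`G` satisfies `β₁^R(G) ≥ β₀^R(G)`. -/
theorem stmt_9 (p : ℕ) [Fact p.Prime]
    (P : Polynomial ℤ_[p]) (hP : P.Monic)
    (Q : Polynomial (ZMod p)) (hQmonic : Q.Monic) (hQirr : Irreducible Q)
    (m : ℕ) (hm : 1 ≤ m) (hred : P.map PadicInt.toZMod = Q ^ m) :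
    IsLocalRing (Polynomial ℤ_[p] ⧸ Ideal.span {P}) ∧
      ∀ (G : Type) [AddCommGroup G] [Module (Polynomial ℤ_[p] ⧸ Ideal.span {P}) G],
        IsFiniteLength (Polynomial ℤ_[p] ⧸ Ideal.span {P}) G →
          minGens (Polynomial ℤ_[p] ⧸ Ideal.span {P}) G ≤
            beta1 (Polynomial ℤ_[p] ⧸ Ideal.span {P}) G :=
  stmt_9_general p P hP Q hQirr m hm hred
end

section
/- Let (R, m, 𝔽_q) be a finite local ring with residue field of q elements and G a finite R-module with b₀ = β₀^R(G) ≤ n. Then the number of submodules M ⊆ R^n with R^n/M ≅ G equals |G|^n / |Aut_R(G)| · ∏_{i=n−b₀+1}^{n} (1 − q^{−i}). -/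
open Function Submodule Module


open Function Submodule Module

lemma card_eq_card_mul_of_fibers {α β : Type*} [Finite α] [Finite β] (f : α → β) (m : ℕ)
    (h : ∀ b : β, Nat.card {a // f a = b} = m) : Nat.card α = Nat.card β * m := by
  classical
  have := Fintype.ofFinite α
  have := Fintype.ofFinite β
  rw [Nat.card_eq_fintype_card, Nat.card_eq_fintype_card,
    ← Fintype.card_congr (Equiv.sigmaFiberEquiv f), Fintype.card_sigma]
  have : ∀ b : β, Fintype.card {a // f a = b} = m := by
    intro b; have := h b; rwa [Nat.card_eq_fintype_card] at this
  simp [this, Finset.sum_const, mul_comm]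

section SurjCount
variable {R M G : Type*} [CommRing R] [AddCommGroup M] [Module R M]
  [AddCommGroup G] [Module R G] [Finite M] [Finite G]

instance : Finite (M →ₗ[R] G) := Finite.of_injective _ (DFunLike.coe_injective (F := M →ₗ[R] G))
instance : Finite (G ≃ₗ[R] G) := Finite.of_injective (fun e => (e : G → G)) (fun a b h => by
  ext x; exact congrFun h x)

lemma card_surj_eq_card_sub_mul_aut :
    Nat.card {f : M →ₗ[R] G // Function.Surjective f} =
      Nat.card {N : Submodule R M // Nonempty ((M ⧸ N) ≃ₗ[R] G)} * Nat.card (G ≃ₗ[R] G) := by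
  classical
  set π : {f : M →ₗ[R] G // Function.Surjective f} →
      {N : Submodule R M // Nonempty ((M ⧸ N) ≃ₗ[R] G)} :=
    fun f => ⟨LinearMap.ker f.1, ⟨f.1.quotKerEquivOfSurjective f.2⟩⟩ with hπ
  refine card_eq_card_mul_of_fibers π _ ?_
  rintro ⟨N, hN⟩
  have e : (M ⧸ N) ≃ₗ[R] G := Classical.choice hN
  -- fibers are in bijection with automorphisms of `G`
  have key : Function.Bijective (fun a : G ≃ₗ[R] G =>
      (⟨⟨((e.trans a : (M ⧸ N) ≃ₗ[R] G) : (M ⧸ N) →ₗ[R] G) ∘ₗ N.mkQ,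
        (e.trans a).surjective.comp N.mkQ_surjective⟩,
        by
          apply Subtype.ext
          show LinearMap.ker _ = N
          rw [LinearMap.ker_comp, LinearEquiv.ker, Submodule.comap_bot, Submodule.ker_mkQ]⟩ :
        {x : {f : M →ₗ[R] G // Function.Surjective f} // π x = ⟨N, hN⟩})) := by
    constructor
    · intro a₁ a₂ hEq
      have h1 := congrArg (fun x => x.1.1) hEq
      ext g
      have hx : ∀ x : M, a₁ (e (Submodule.Quotient.mk x)) = a₂ (e (Submodule.Quotient.mk x)) := by
        intro x
        have := congrArg (fun (f : M →ₗ[R] G) => f x) h1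
        simpa using this
      obtain ⟨y, rfl⟩ := e.surjective g
      obtain ⟨x, rfl⟩ := N.mkQ_surjective y
      exact hx x
    · rintro ⟨⟨f, hf⟩, hker⟩
      have hkf : LinearMap.ker f = N := congrArg Subtype.val hker
      refine ⟨e.symm.trans ((Submodule.quotEquivOfEq N (LinearMap.ker f) hkf.symm).trans
        (f.quotKerEquivOfSurjective hf)), ?_⟩
      apply Subtype.ext
      apply Subtype.ext
      apply LinearMap.ext
      intro x
      show ((Submodule.quotEquivOfEq N (LinearMap.ker f) hkf.symm).trans
        (f.quotKerEquivOfSurjective hf)) (e.symm (e (N.mkQ x))) = f x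
      rw [LinearEquiv.symm_apply_apply]
      show (f.quotKerEquivOfSurjective hf) ((Submodule.quotEquivOfEq N (LinearMap.ker f) hkf.symm)
        (Submodule.Quotient.mk x)) = f x
      rw [Submodule.quotEquivOfEq_mk]
      rfl
  rw [← Nat.card_eq_of_bijective _ key]
end SurjCount

/-- Surjective linear maps `R^n → G` correspond to spanning `n`-tuples. -/
noncomputable def surjEquivSpanning (R G : Type*) [CommRing R] [AddCommGroup G] [Module R G]
    (n : ℕ) :
    {f : (Fin n → R) →ₗ[R] G // Function.Surjective f} ≃
      {v : Fin n → G // Submodule.span R (Set.range v) = ⊤} := by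
  refine ((Equiv.subtypeEquiv ((Pi.basisFun R (Fin n)).constr R
    (M' := G)).toEquiv ?_).symm)
  intro v
  show _ ↔ Function.Surjective ((Pi.basisFun R (Fin n)).constr R v)
  rw [← LinearMap.range_eq_top, Basis.constr_range]

section FieldCount
variable {K V W : Type*} [Field K] [AddCommGroup V] [Module K V] [AddCommGroup W] [Module K W]

lemma constr_injective_iff {b : ℕ} (B : Basis (Fin b) K V) (v : Fin b → W) :
    Function.Injective (B.constr K v) ↔ LinearIndependent K v := by
  constructor
  · intro hinj
    have hv : v = (B.constr K v) ∘ B := by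
      funext i; simp [Basis.constr_basis]
    rw [hv]
    exact B.linearIndependent.map' _ (LinearMap.ker_eq_bot.mpr hinj)
  · intro hli
    rw [← LinearMap.ker_eq_bot, LinearMap.ker_eq_bot']
    intro x hx
    have hrepr : ∑ i, B.repr x i • v i = 0 := by
      have := congrArg (B.constr K v) (B.sum_repr x)
      simp only [map_sum, map_smul, Basis.constr_basis] at this
      rw [this, hx]
    have hzero := Fintype.linearIndependent_iff.mp hli _ hrepr
    have := B.sum_repr x
    simp only [hzero, zero_smul, Finset.sum_const_zero] at this
    exact this.symm

lemma dualMap_coe_injective [FiniteDimensional K V] :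
    Function.Injective (fun f : W →ₗ[K] V => f.dualMap) := by
  intro f g h
  ext w
  have : ∀ φ : Module.Dual K V, φ (f w - g w) = 0 := by
    intro φ
    have := congrArg (fun m : Module.Dual K V →ₗ[K] Module.Dual K W => m φ w) h
    simp only [LinearMap.dualMap_apply] at this
    simp [this]
  have := (Module.forall_dual_apply_eq_zero_iff K (f w - g w)).mp this
  rwa [sub_eq_zero] at this

lemma card_surjective_eq_card_injective_dual [FiniteDimensional K V] [FiniteDimensional K W]
    [Finite K] :
    Nat.card {f : W →ₗ[K] V // Function.Surjective f} =
      Nat.card {g : Module.Dual K V →ₗ[K] Module.Dual K W // Function.Injective g} := by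
  have : Finite V := Module.finite_of_finite K
  have : Finite W := Module.finite_of_finite K
  have : Finite (W →ₗ[K] V) := Finite.of_injective _ (DFunLike.coe_injective (F := W →ₗ[K] V))
  have : Finite (Module.Dual K V →ₗ[K] Module.Dual K W) :=
    Finite.of_injective _ (DFunLike.coe_injective (F := Module.Dual K V →ₗ[K] Module.Dual K W))
  refine Nat.le_antisymm ?_ ?_
  · refine Nat.card_le_card_of_injective
      (fun f => ⟨f.1.dualMap, LinearMap.dualMap_injective_iff.mpr f.2⟩) ?_
    intro f g h
    exact Subtype.ext (dualMap_coe_injective (congrArg Subtype.val h))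
  · refine Nat.card_le_card_of_injective (fun g =>
      ⟨(Module.evalEquiv K V).symm.toLinearMap ∘ₗ g.1.dualMap ∘ₗ
        (Module.evalEquiv K W).toLinearMap, ?_⟩) ?_
    · exact (Module.evalEquiv K V).symm.surjective.comp
        ((LinearMap.dualMap_surjective_iff.mpr g.2).comp (Module.evalEquiv K W).surjective)
    · intro g₁ g₂ h
      have h1 := congrArg Subtype.val h
      have h2 : (g₁.1.dualMap : Module.Dual K (Module.Dual K W) →ₗ[K] _) = g₂.1.dualMap := by
        apply LinearMap.ext
        intro ξ
        have := congrArg (fun (m : W →ₗ[K] V)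
          => Module.evalEquiv K V (m ((Module.evalEquiv K W).symm ξ))) h1
        have hξ : Module.Dual.eval K W ((Module.evalEquiv K W).symm ξ) = ξ := by
          rw [← Module.evalEquiv_apply, LinearEquiv.apply_symm_apply]
        simpa [hξ] using this
      exact Subtype.ext (dualMap_coe_injective h2)
end FieldCount

lemma card_spanning (K V : Type*) [Field K] [Finite K] [AddCommGroup V] [Module K V]
    [Finite V] {n : ℕ} (h : Module.finrank K V ≤ n) :
    Nat.card {w : Fin n → V // Submodule.span K (Set.range w) = ⊤} =
      ∏ i : Fin (Module.finrank K V), (Nat.card K ^ n - Nat.card K ^ i.val) := by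
  classical
  have := Fintype.ofFinite K
  set b := Module.finrank K V with hb
  -- pass to surjective linear maps
  rw [Nat.card_congr (surjEquivSpanning K V n).symm,
    card_surjective_eq_card_injective_dual]
  -- choose a basis of the dual of `V`
  have hdb : Module.finrank K (Module.Dual K V) = b := Subspace.dual_finrank_eq
  let B : Basis (Fin b) K (Module.Dual K V) :=
    (Module.finBasis K (Module.Dual K V)).reindex (finCongr hdb)
  have : Finite (Module.Dual K (Fin n → K)) := by
    have : Finite (Fin n → K) := inferInstance
    exact Finite.of_injective _ (DFunLike.coe_injective (F := Module.Dual K (Fin n → K)))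
  have hcongr : {g : Module.Dual K V →ₗ[K] Module.Dual K (Fin n → K) // Function.Injective g} ≃
      {s : Fin b → Module.Dual K (Fin n → K) // LinearIndependent K s} :=
    ((B.constr K (M' := Module.Dual K (Fin n → K))).toEquiv.subtypeEquiv
      (fun v => (constr_injective_iff B v).symm)).symm
  rw [Nat.card_congr hcongr]
  have hrk : Module.finrank K (Module.Dual K (Fin n → K)) = n := by
    rw [Subspace.dual_finrank_eq, Module.finrank_fin_fun]
  have hk : b ≤ Module.finrank K (Module.Dual K (Fin n → K)) := by rw [hrk]; exact h
  have := card_linearIndependent (K := K) (V := Module.Dual K (Fin n → K)) hk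
  rw [this]
  simp [hrk, Nat.card_eq_fintype_card]

section Local
variable {R : Type*} [CommRing R] [IsLocalRing R]
  {G : Type*} [AddCommGroup G] [Module R G] [Module.Finite R G]

local notation "𝔪" => IsLocalRing.maximalIdeal R
local notation "k" => IsLocalRing.ResidueField R

noncomputable instance : Module k (G ⧸ (𝔪 • ⊤ : Submodule R G)) :=
  inferInstanceAs (Module (R ⧸ 𝔪) (G ⧸ (𝔪 • ⊤ : Submodule R G)))

instance : IsScalarTower R k (G ⧸ (𝔪 • ⊤ : Submodule R G)) :=
  inferInstanceAs (IsScalarTower R (R ⧸ 𝔪) (G ⧸ (𝔪 • ⊤ : Submodule R G)))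

lemma span_top_iff_span_residue (s : Set G) :
    Submodule.span R s = ⊤ ↔
      Submodule.span k ((𝔪 • ⊤ : Submodule R G).mkQ '' s) = ⊤ := by
  rw [← IsLocalRing.map_mkQ_eq_top (N := Submodule.span R s), Submodule.map_span,
    ← Submodule.restrictScalars_span R k Ideal.Quotient.mk_surjective]
  constructor
  · intro h
    rwa [← Submodule.restrictScalars_eq_top_iff (S := R)]
  · intro h
    rw [h]; rfl
end Local

section Local2
variable {R : Type*} [CommRing R] [IsLocalRing R]
  {G : Type*} [AddCommGroup G] [Module R G] [Module.Finite R G] [Finite G]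

local notation "𝔪" => IsLocalRing.maximalIdeal R
local notation "k" => IsLocalRing.ResidueField R

lemma minGens_eq_finrank [Finite R] :
    minGens R G = Module.finrank k (G ⧸ (𝔪 • ⊤ : Submodule R G)) := by
  classical
  have := Fintype.ofFinite G
  set V := G ⧸ (𝔪 • ⊤ : Submodule R G) with hV
  set p := (𝔪 • ⊤ : Submodule R G).mkQ with hp
  have hVfin : Finite V := Finite.of_surjective p (Submodule.mkQ_surjective _)
  have hkfin : Finite k := Finite.of_surjective _ Ideal.Quotient.mk_surjective
  set b := Module.finrank k V with hb
  apply le_antisymm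
  · -- exhibit a spanning set of size b
    obtain ⟨c⟩ : Nonempty (Basis (Fin b) k V) := ⟨Module.finBasis k V |>.reindex (finCongr rfl)⟩
    choose g hg using fun i => Submodule.mkQ_surjective (𝔪 • ⊤ : Submodule R G) (c i)
    have hginj : Function.Injective g := by
      intro i j hij
      apply c.injective
      rw [← hg i, ← hg j, hij]
    refine Nat.sInf_le ⟨Finset.univ.image g, ?_, ?_⟩
    · rw [Finset.card_image_of_injective _ hginj, Finset.card_univ, Fintype.card_fin]
    · rw [span_top_iff_span_residue]
      have : p '' ((Finset.univ.image g : Finset G) : Set G) = Set.range c := by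
        ext x
        simp only [Finset.coe_image, Finset.coe_univ, Set.image_univ, Set.mem_image,
          Set.mem_range]
        constructor
        · rintro ⟨y, ⟨i, rfl⟩, rfl⟩; exact ⟨i, (hg i).symm⟩
        · rintro ⟨i, rfl⟩; exact ⟨g i, ⟨i, rfl⟩, hg i⟩
      rw [this, c.span_eq]
  · -- every spanning set has ≥ b elements
    have hne : {m | ∃ s : Finset G, s.card = m ∧ Submodule.span R (s : Set G) = ⊤}.Nonempty :=
      ⟨Fintype.card G, Finset.univ, rfl, by simp⟩
    apply le_csInf hne
    rintro m ⟨s, rfl, hs⟩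
    rw [span_top_iff_span_residue] at hs
    have h1 : Module.finrank k V ≤ (s.image p).card := by
      conv_lhs => rw [← finrank_top k V, ← hs]
      rw [← Finset.coe_image] at hs ⊢
      exact finrank_span_finset_le_card _
    exact h1.trans (Finset.card_image_le)
end Local2

/-- The preimage of a point under a linear map is equivalent to the kernel. -/
def preimageEquivKer {R M N : Type*} [Ring R] [AddCommGroup M] [Module R M]
    [AddCommGroup N] [Module R N] (f : M →ₗ[R] N) (x : N) (y : M) (hy : f y = x) :
    {g : M // f g = x} ≃ LinearMap.ker f where
  toFun g := ⟨g.1 - y, by simp [LinearMap.mem_ker, g.2, hy]⟩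
  invFun h := ⟨h.1 + y, by
    have := h.2
    rw [LinearMap.mem_ker] at this
    simp [this, hy]⟩
  left_inv g := by ext; simp
  right_inv h := by ext; simp

section Local3
variable {R : Type*} [CommRing R] [IsLocalRing R] [Finite R]
  {G : Type*} [AddCommGroup G] [Module R G] [Finite G]

local notation "𝔪" => IsLocalRing.maximalIdeal R
local notation "k" => IsLocalRing.ResidueField R

lemma card_spanning_tuples_eq (n : ℕ) :
    Nat.card {v : Fin n → G // Submodule.span R (Set.range v) = ⊤} =
      Nat.card (𝔪 • ⊤ : Submodule R G) ^ n *
        Nat.card {w : Fin n → (G ⧸ (𝔪 • ⊤ : Submodule R G)) //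
          Submodule.span k (Set.range w) = ⊤} := by
  classical
  set V := G ⧸ (𝔪 • ⊤ : Submodule R G) with hV
  set p := (𝔪 • ⊤ : Submodule R G).mkQ with hp
  have hVfin : Finite V := Finite.of_surjective p (Submodule.mkQ_surjective _)
  have hkfin : Finite k := Finite.of_surjective _ Ideal.Quotient.mk_surjective
  have hspan : ∀ v : Fin n → G, Submodule.span R (Set.range v) = ⊤ ↔
      Submodule.span k (Set.range (p ∘ v)) = ⊤ := by
    intro v
    rw [span_top_iff_span_residue, ← Set.range_comp]
  rw [mul_comm]
  refine card_eq_card_mul_of_fibers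
    (fun v => ⟨p ∘ v.1, (hspan v.1).mp v.2⟩) _ ?_
  rintro ⟨w, hw⟩
  -- the fiber is equivalent to `(ker p)^n`
  have e1 : {x : {v : Fin n → G // Submodule.span R (Set.range v) = ⊤} //
        (⟨p ∘ x.1, (hspan x.1).mp x.2⟩ :
          {w : Fin n → V // Submodule.span k (Set.range w) = ⊤}) = ⟨w, hw⟩} ≃
      {v : Fin n → G // ∀ i, p (v i) = w i} := by
    refine ⟨fun x => ⟨x.1.1, fun i => congrFun (congrArg Subtype.val x.2) i⟩,
      fun v => ⟨⟨v.1, ?_⟩, ?_⟩, fun x => by ext; rfl, fun v => by ext; rfl⟩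
    · rw [hspan]
      have : p ∘ v.1 = w := funext v.2
      rw [this, hw]
    · apply Subtype.ext
      exact funext v.2
  choose y hy using fun i => Submodule.mkQ_surjective (𝔪 • ⊤ : Submodule R G) (w i)
  have e2 : {v : Fin n → G // ∀ i, p (v i) = w i} ≃ (Fin n → LinearMap.ker p) :=
    (Equiv.subtypePiEquivPi).trans
      (Equiv.piCongrRight fun i => preimageEquivKer p (w i) (y i) (hy i))
  rw [Nat.card_congr (e1.trans e2), Nat.card_pi, Finset.prod_const, Finset.card_univ,
    Fintype.card_fin]
  congr 1
  exact Nat.card_congr (Equiv.setCongr (by rw [hp, Submodule.ker_mkQ]))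

lemma card_G_eq :
    Nat.card G = Nat.card (G ⧸ (𝔪 • ⊤ : Submodule R G)) *
      Nat.card (𝔪 • ⊤ : Submodule R G) := by
  classical
  set p := (𝔪 • ⊤ : Submodule R G).mkQ with hp
  have hVfin : Finite (G ⧸ (𝔪 • ⊤ : Submodule R G)) :=
    Finite.of_surjective p (Submodule.mkQ_surjective _)
  refine card_eq_card_mul_of_fibers p _ ?_
  intro x
  obtain ⟨y, hy⟩ := Submodule.mkQ_surjective (𝔪 • ⊤ : Submodule R G) x
  rw [Nat.card_congr (preimageEquivKer p x y hy)]
  exact Nat.card_congr (Equiv.setCongr (by rw [hp, Submodule.ker_mkQ]))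
end Local3

lemma prod_arith (q b n : ℕ) (hb : b ≤ n) (hq : 0 < q) :
    ((∏ i ∈ Finset.range b, (q ^ n - q ^ i) : ℕ) : ℚ) =
      ((q : ℚ) ^ b) ^ n * ∏ i ∈ Finset.Icc (n - b + 1) n, (1 - ((q : ℚ) ^ i)⁻¹) := by
  have hq0 : (q : ℚ) ≠ 0 := by positivity
  have hIcc : ∏ i ∈ Finset.Icc (n - b + 1) n, (1 - ((q : ℚ) ^ i)⁻¹) =
      ∏ i ∈ Finset.range b, (1 - ((q : ℚ) ^ (n - i))⁻¹) := by
    refine (Finset.prod_nbij' (fun i => n - i) (fun j => n - j) ?_ ?_ ?_ ?_ ?_).symm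
    · intro i hi; simp only [Finset.mem_range] at hi; simp only [Finset.mem_Icc]; omega
    · intro j hj; simp only [Finset.mem_Icc] at hj; simp only [Finset.mem_range]; omega
    · intro i hi; simp only [Finset.mem_range] at hi; show n - (n - i) = i; omega
    · intro j hj; simp only [Finset.mem_Icc] at hj; show n - (n - j) = j; omega
    · intro i hi; rfl
  rw [hIcc, ← pow_mul, Nat.cast_prod]
  have hpow : (q : ℚ) ^ (b * n) = ∏ _i ∈ Finset.range b, (q : ℚ) ^ n := by
    rw [Finset.prod_const, Finset.card_range, ← pow_mul, mul_comm]
  rw [hpow, ← Finset.prod_mul_distrib]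
  refine Finset.prod_congr rfl ?_
  intro i hi
  simp only [Finset.mem_range] at hi
  have hin : i ≤ n := le_trans (Nat.le_of_lt hi) hb
  have hle : q ^ i ≤ q ^ n := Nat.pow_le_pow_right hq hin
  rw [Nat.cast_sub hle]
  have hsplit : (q : ℚ) ^ n = (q : ℚ) ^ i * (q : ℚ) ^ (n - i) := by
    rw [← pow_add]; congr 1; omega
  push_cast
  rw [mul_sub, mul_one, hsplit]
  congr 1
  field_simp

instance finiteSubmodule {R M : Type*} [Semiring R] [AddCommMonoid M] [Module R M] [Finite M] :
    Finite (Submodule R M) :=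
  Finite.of_injective (fun N => (N : Set M)) fun _ _ h => SetLike.coe_injective h

/-- Let `(R, m, 𝔽_q)` be a finite local ring with residue field of
`q` elements and `G` a finite `R`-module with `b₀ = β₀^R(G) ≤ n`. Then the number of
submodules `M ⊆ R^n` with `R^n/M ≅ G` equals
`|G|^n / |Aut_R(G)| · ∏_{i=n−b₀+1}^{n} (1 − q^{−i})`. -/
theorem stmt_10 (R : Type*) [CommRing R] [IsLocalRing R] [Finite R]
    (G : Type*) [AddCommGroup G] [Module R G] [Finite G]
    (n : ℕ) (hb : minGens R G ≤ n) :
    (Nat.card {N : Submodule R (Fin n → R) //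
        Nonempty (((Fin n → R) ⧸ N) ≃ₗ[R] G)} : ℚ) =
      (Nat.card G : ℚ) ^ n / (Nat.card (G ≃ₗ[R] G) : ℚ) *
        ∏ i ∈ Finset.Icc (n - minGens R G + 1) n,
          (1 - ((Nat.card (IsLocalRing.ResidueField R) : ℚ) ^ i)⁻¹) := by
  classical
  have hkfin : Finite (IsLocalRing.ResidueField R) :=
    Finite.of_surjective _ Ideal.Quotient.mk_surjective
  have := Fintype.ofFinite (IsLocalRing.ResidueField R)
  set V := G ⧸ ((IsLocalRing.maximalIdeal R) • ⊤ : Submodule R G) with hV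
  have hVfin : Finite V := Finite.of_surjective _ (Submodule.mkQ_surjective _)
  have := Fintype.ofFinite V
  set q : ℕ := Nat.card (IsLocalRing.ResidueField R) with hq
  set b : ℕ := Module.finrank (IsLocalRing.ResidueField R) V with hbdef
  have hmin : minGens R G = b := minGens_eq_finrank
  have hbn : b ≤ n := hmin ▸ hb
  have hq1 : 0 < q := Nat.card_pos
  -- the chain of counting identities
  have hS : Nat.card {N : Submodule R (Fin n → R) //
        Nonempty (((Fin n → R) ⧸ N) ≃ₗ[R] G)} * Nat.card (G ≃ₗ[R] G) =
      Nat.card ((IsLocalRing.maximalIdeal R) • ⊤ : Submodule R G) ^ n *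
        Nat.card {w : Fin n → V //
          Submodule.span (IsLocalRing.ResidueField R) (Set.range w) = ⊤} := by
    rw [← card_surj_eq_card_sub_mul_aut, Nat.card_congr (surjEquivSpanning R G n),
      card_spanning_tuples_eq n]
  have hw : Nat.card {w : Fin n → V //
        Submodule.span (IsLocalRing.ResidueField R) (Set.range w) = ⊤} =
      ∏ i ∈ Finset.range b, (q ^ n - q ^ i) := by
    rw [card_spanning (IsLocalRing.ResidueField R) V hbn]
    rw [← Fin.prod_univ_eq_prod_range (fun i => q ^ n - q ^ i) b]
  have hcardV : Nat.card V = q ^ b := by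
    rw [hq, hbdef, Nat.card_eq_fintype_card, Nat.card_eq_fintype_card,
      card_eq_pow_finrank (K := IsLocalRing.ResidueField R)]
  have hcardG : Nat.card G = q ^ b *
      Nat.card ((IsLocalRing.maximalIdeal R) • ⊤ : Submodule R G) := by
    rw [card_G_eq (R := R) (G := G), hcardV]
  -- now the rational computation
  have hAutpos : (0 : ℚ) < Nat.card (G ≃ₗ[R] G) := by
    have : Nonempty (G ≃ₗ[R] G) := ⟨LinearEquiv.refl R G⟩
    exact_mod_cast Nat.card_pos
  rw [hmin, div_mul_eq_mul_div, eq_div_iff hAutpos.ne']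
  have hLHS : (Nat.card {N : Submodule R (Fin n → R) //
      Nonempty (((Fin n → R) ⧸ N) ≃ₗ[R] G)} : ℚ) * Nat.card (G ≃ₗ[R] G) =
      ((Nat.card ((IsLocalRing.maximalIdeal R) • ⊤ : Submodule R G) ^ n *
        ∏ i ∈ Finset.range b, (q ^ n - q ^ i) : ℕ) : ℚ) := by
    rw [← Nat.cast_mul, hS, hw]
  rw [hLHS, Nat.cast_mul, prod_arith q b n hbn hq1, hcardG]
  push_cast
  ring
end

section
/- Noncommutative Weierstrass preparation (finite version): Let p be a prime, k, n ≥ 1, A_k = M_n(ℤ/p^k ℤ), and M(t), N(t) ∈ A_k[t]. Then for every X ∈ A_k, there exist unique U(t) ∈ A_k[t] and X' ∈ A_k such that (X + I_n t + p I_n t² M(t)) · U(t) = X' + I_n t + p I_n t² N(t) in A_k[t]. Moreover U(t) ∈ I_n + p A_k[t] and X' ≡ X (mod p). -/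
/-!
Write the left factor as `(t + X) + ε H` with `ε = p` central and nilpotent. Division by the monic
`t + X` with a constant remainder is possible and unique. Existence then follows by successive
approximation: the error left after dividing is a multiple of `ε`, then of `ε²`, …, and vanishes
at `ε^k = 0`. For uniqueness, if `(t + X + ε H) U` is constant and `ε^(j+1) U = 0`, then
`(t + X) (ε^j U)` is constant, so `ε^j U = 0`; descending from `j = k` gives `U = 0`.
Modulo `ε` the equation reads `(t + X) (U - 1) = X' - X`, so uniqueness of division gives `U ≡ 1`
and `X' ≡ X`.
-/

open Polynomial

namespace Polynomial

variable {S : Type*} [Ring S]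

theorem commute_C_of_mem_center {ε : S} (hε : ε ∈ Set.center S) (f : S[X]) :
    Commute (C ε) f := by
  ext n
  simp only [coeff_C_mul, coeff_mul_C]
  exact (Set.mem_center_iff.mp hε).comm _

theorem commute_C_pow_of_mem_center {ε : S} (hε : ε ∈ Set.center S) (j : ℕ) (f : S[X]) :
    Commute (C (ε ^ j)) f :=
  commute_C_of_mem_center ((Submonoid.center S).pow_mem hε j) f

theorem exists_X_add_C_mul_add_C_eq (a : S) (T : S[X]) :
    ∃ (U : S[X]) (r : S), (X + C a) * U + C r = T := by
  nontriviality S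
  refine ⟨T /ₘ (X + C a), (T %ₘ (X + C a)).coeff 0, ?_⟩
  have hdeg : (T %ₘ (X + C a)).degree ≤ 0 := by
    simpa [degree_X_add_C, Nat.WithBot.lt_one_iff_le_zero] using
      degree_modByMonic_lt T (monic_X_add_C a)
  rw [← eq_C_of_degree_le_zero hdeg, add_comm]
  exact modByMonic_add_div T (X + C a)

theorem eq_zero_of_X_add_C_mul_add_C_eq_zero {a : S} {U : S[X]} {r : S}
    (h : (X + C a) * U + C r = 0) : U = 0 ∧ r = 0 := by
  nontriviality S
  obtain ⟨hU, hr⟩ := div_modByMonic_unique U (C r) (monic_X_add_C a)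
    ⟨add_comm _ _, by simpa [degree_X_add_C] using degree_C_le.trans_lt zero_lt_one⟩
  rw [h, zero_divByMonic] at hU
  rw [h, zero_modByMonic, eq_comm, C_eq_zero] at hr
  exact ⟨hU.symm, hr⟩

section Perturbation

variable {ε : S} (hε : ε ∈ Set.center S) (a : S) (H : S[X])
include hε

theorem exists_X_add_C_add_C_mul_mul_eq_C_add (hnil : IsNilpotent ε) (T : S[X]) :
    ∃ (U : S[X]) (r : S), (X + C a + C ε * H) * U = C r + T := by
  obtain ⟨k, hk⟩ := hnil
  have approx : ∀ j : ℕ, ∃ (U : S[X]) (r : S) (E : S[X]),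
      (X + C a + C ε * H) * U + C (ε ^ j) * E = C r + T := by
    intro j
    induction j with
    | zero => exact ⟨0, 0, T, by simp⟩
    | succ j ih =>
      obtain ⟨U, r, E, hU⟩ := ih
      obtain ⟨V, s, hV⟩ := exists_X_add_C_mul_add_C_eq a E
      refine ⟨U + C (ε ^ j) * V, r - ε ^ j * s, -(H * V), ?_⟩
      have hFV : (X + C a + C ε * H) * V = E - C s + C ε * (H * V) := by
        rw [← hV]; noncomm_ring
      calc (X + C a + C ε * H) * (U + C (ε ^ j) * V) + C (ε ^ (j + 1)) * -(H * V)
          = (X + C a + C ε * H) * U + C (ε ^ j) * E - C (ε ^ j) * C s := by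
            rw [mul_add, ← mul_assoc, ← (commute_C_pow_of_mem_center hε j _).eq, mul_assoc,
              hFV, pow_succ, C_mul]
            noncomm_ring
        _ = C (r - ε ^ j * s) + T := by rw [hU, C_sub, C_mul]; abel
  obtain ⟨U, r, E, hU⟩ := approx k
  exact ⟨U, r, by rwa [hk, C_0, zero_mul, add_zero] at hU⟩

theorem C_pow_mul_eq_zero_of_C_pow_succ_mul_eq_zero {U : S[X]} {r : S}
    (h : (X + C a + C ε * H) * U = C r) {j : ℕ} (hj : C (ε ^ (j + 1)) * U = 0) :
    C (ε ^ j) * U = 0 := by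
  have hqU : (X + C a) * U = C r - C ε * (H * U) := by rw [← h]; noncomm_ring
  have hHU : C (ε ^ (j + 1)) * (H * U) = 0 := by
    rw [← mul_assoc, (commute_C_pow_of_mem_center hε _ H).eq, mul_assoc, hj, mul_zero]
  have hdiv : (X + C a) * (C (ε ^ j) * U) + C (-(ε ^ j * r)) = 0 :=
    calc (X + C a) * (C (ε ^ j) * U) + C (-(ε ^ j * r))
        = C (ε ^ j) * ((X + C a) * U) - C (ε ^ j) * C r := by
          rw [← mul_assoc, ← (commute_C_pow_of_mem_center hε j _).eq, mul_assoc, C_neg, C_mul]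
          abel
      _ = -(C (ε ^ (j + 1)) * (H * U)) := by rw [hqU, pow_succ, C_mul]; noncomm_ring
      _ = 0 := by rw [hHU, neg_zero]
  exact (eq_zero_of_X_add_C_mul_add_C_eq_zero hdiv).1

theorem eq_zero_of_X_add_C_add_C_mul_mul_eq_C (hnil : IsNilpotent ε) {U : S[X]} {r : S}
    (h : (X + C a + C ε * H) * U = C r) : U = 0 ∧ r = 0 := by
  obtain ⟨k, hk⟩ := hnil
  have descend : ∀ i, C (ε ^ (k - i)) * U = 0 := by
    intro i
    induction i with
    | zero => rw [Nat.sub_zero, hk, C_0, zero_mul]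
    | succ i ih =>
      rcases Nat.lt_or_ge i k with hi | hi
      · refine C_pow_mul_eq_zero_of_C_pow_succ_mul_eq_zero hε a H h ?_
        rwa [← Nat.sub_add_comm hi, Nat.add_sub_add_right]
      · rwa [Nat.sub_eq_zero_of_le (Nat.le_succ_of_le hi), ← Nat.sub_eq_zero_of_le hi]
  have hU : U = 0 := by simpa using descend k
  rw [hU, mul_zero, eq_comm, C_eq_zero] at h
  exact ⟨hU, h⟩

theorem existsUnique_X_add_C_add_C_mul_mul_eq_C_add (hnil : IsNilpotent ε) (T : S[X]) :
    ∃! Ur : S[X] × S, (X + C a + C ε * H) * Ur.1 = C Ur.2 + T := by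
  obtain ⟨U, r, hU⟩ := exists_X_add_C_add_C_mul_mul_eq_C_add hε a H hnil T
  refine ⟨(U, r), hU, fun ⟨U', r'⟩ hU' => ?_⟩
  have hdiff : (X + C a + C ε * H) * (U' - U) = C (r' - r) := by
    rw [mul_sub, hU, hU', C_sub]; abel
  obtain ⟨hU, hr⟩ := eq_zero_of_X_add_C_add_C_mul_mul_eq_C hε a H hnil hdiff
  exact Prod.ext (sub_eq_zero.mp hU) (sub_eq_zero.mp hr)

theorem exists_eq_one_add_C_mul_and_exists_sub_eq_mul {U K : S[X]} {b : S}
    (h : (X + C a + C ε * H) * U = C b + X + C ε * K) :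
    (∃ V, U = 1 + C ε * V) ∧ ∃ s, b - a = ε * s := by
  obtain ⟨V, s, hV⟩ := exists_X_add_C_mul_add_C_eq a (K - H * U)
  have hqU : (X + C a) * U = C b + X + C ε * K - C ε * (H * U) := by rw [← h]; noncomm_ring
  have hqV : (X + C a) * V = K - H * U - C s := eq_sub_of_add_eq hV
  have hdiv : (X + C a) * (U - 1 - C ε * V) + C (a - b - ε * s) = 0 :=
    calc (X + C a) * (U - 1 - C ε * V) + C (a - b - ε * s)
        = (X + C a) * U - (X + C a) - C ε * ((X + C a) * V) + C (a - b - ε * s) := by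
          rw [mul_sub, mul_sub, mul_one, ← mul_assoc, ← (commute_C_of_mem_center hε _).eq,
            mul_assoc]
      _ = 0 := by rw [hqU, hqV, C_sub, C_sub, C_mul]; noncomm_ring
  obtain ⟨hU, hb⟩ := eq_zero_of_X_add_C_mul_add_C_eq_zero hdiv
  rw [sub_sub, sub_eq_zero] at hU hb
  exact ⟨⟨V, hU⟩, ⟨-s, by rw [hb]; noncomm_ring⟩⟩

end Perturbation

end Polynomial

theorem stmt_16_general (p k n : ℕ)
    (M N : Polynomial (Matrix (Fin n) (Fin n) (ZMod (p ^ k))))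
    (X : Matrix (Fin n) (Fin n) (ZMod (p ^ k))) :
    (∃! UX : Polynomial (Matrix (Fin n) (Fin n) (ZMod (p ^ k))) ×
        Matrix (Fin n) (Fin n) (ZMod (p ^ k)),
      (Polynomial.C X + Polynomial.X +
          (p : Polynomial (Matrix (Fin n) (Fin n) (ZMod (p ^ k)))) * Polynomial.X ^ 2 * M)
        * UX.1 =
      Polynomial.C UX.2 + Polynomial.X +
          (p : Polynomial (Matrix (Fin n) (Fin n) (ZMod (p ^ k)))) * Polynomial.X ^ 2 * N) ∧
    (∀ (U : Polynomial (Matrix (Fin n) (Fin n) (ZMod (p ^ k))))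
        (X' : Matrix (Fin n) (Fin n) (ZMod (p ^ k))),
      (Polynomial.C X + Polynomial.X +
          (p : Polynomial (Matrix (Fin n) (Fin n) (ZMod (p ^ k)))) * Polynomial.X ^ 2 * M)
        * U =
      Polynomial.C X' + Polynomial.X +
          (p : Polynomial (Matrix (Fin n) (Fin n) (ZMod (p ^ k)))) * Polynomial.X ^ 2 * N →
      (∃ V, U = 1 + (p : Polynomial (Matrix (Fin n) (Fin n) (ZMod (p ^ k)))) * V) ∧
        (∀ i j, (p : ZMod (p ^ k)) ∣ (X' - X) i j)) := by
  have hp : (p : Polynomial (Matrix (Fin n) (Fin n) (ZMod (p ^ k))))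
      = C (p : Matrix (Fin n) (Fin n) (ZMod (p ^ k))) := (map_natCast C p).symm
  have hF : C X + Polynomial.X + (p : Polynomial (Matrix (Fin n) (Fin n) (ZMod (p ^ k))))
      * Polynomial.X ^ 2 * M = Polynomial.X + C X
        + C (p : Matrix (Fin n) (Fin n) (ZMod (p ^ k))) * (Polynomial.X ^ 2 * M) := by
    rw [hp]; noncomm_ring
  have hcenter := Set.natCast_mem_center (Matrix (Fin n) (Fin n) (ZMod (p ^ k))) p
  have hnil : IsNilpotent (p : Matrix (Fin n) (Fin n) (ZMod (p ^ k))) :=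
    ⟨k, by rw [← Nat.cast_pow, ← map_natCast (algebraMap (ZMod (p ^ k)) _),
      ZMod.natCast_self, map_zero]⟩
  refine ⟨?_, fun U X' h => ?_⟩
  · refine (existsUnique_congr fun Ur => ?_).mpr
      (existsUnique_X_add_C_add_C_mul_mul_eq_C_add hcenter X (Polynomial.X ^ 2 * M) hnil
        (Polynomial.X + C (p : Matrix (Fin n) (Fin n) (ZMod (p ^ k))) * (Polynomial.X ^ 2 * N)))
    rw [hF, hp, mul_assoc, add_assoc (C Ur.2)]
  · obtain ⟨hU, s, hs⟩ := exists_eq_one_add_C_mul_and_exists_sub_eq_mul hcenter X _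
      (K := Polynomial.X ^ 2 * N) (by rw [← hF, h, hp, mul_assoc])
    refine ⟨by rwa [hp], fun i j => ⟨s i j, ?_⟩⟩
    rw [hs, ← nsmul_eq_mul p s, Matrix.smul_apply, nsmul_eq_mul]

/-- Finite noncommutative Weierstrass preparation. Let `p` be a
prime, `k, n ≥ 1`, `A_k = M_n(ℤ/p^k ℤ)`, and `M(t), N(t) ∈ A_k[t]`. Then for every
`X ∈ A_k` there exist unique `U(t) ∈ A_k[t]` and `X' ∈ A_k` such that
`(X + I_n t + p I_n t² M(t)) · U(t) = X' + I_n t + p I_n t² N(t)` in `A_k[t]`.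
Moreover `U(t) ∈ I_n + p A_k[t]` and `X' ≡ X (mod p)` (entrywise). -/
theorem stmt_16 (p k n : ℕ) [Fact p.Prime] (hk : 1 ≤ k) (hn : 1 ≤ n)
    (M N : Polynomial (Matrix (Fin n) (Fin n) (ZMod (p ^ k))))
    (X : Matrix (Fin n) (Fin n) (ZMod (p ^ k))) :
    (∃! UX : Polynomial (Matrix (Fin n) (Fin n) (ZMod (p ^ k))) ×
        Matrix (Fin n) (Fin n) (ZMod (p ^ k)),
      (Polynomial.C X + Polynomial.X +
          (p : Polynomial (Matrix (Fin n) (Fin n) (ZMod (p ^ k)))) * Polynomial.X ^ 2 * M)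
        * UX.1 =
      Polynomial.C UX.2 + Polynomial.X +
          (p : Polynomial (Matrix (Fin n) (Fin n) (ZMod (p ^ k)))) * Polynomial.X ^ 2 * N) ∧
    (∀ (U : Polynomial (Matrix (Fin n) (Fin n) (ZMod (p ^ k))))
        (X' : Matrix (Fin n) (Fin n) (ZMod (p ^ k))),
      (Polynomial.C X + Polynomial.X +
          (p : Polynomial (Matrix (Fin n) (Fin n) (ZMod (p ^ k)))) * Polynomial.X ^ 2 * M)
        * U =
      Polynomial.C X' + Polynomial.X +
          (p : Polynomial (Matrix (Fin n) (Fin n) (ZMod (p ^ k)))) * Polynomial.X ^ 2 * N →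
      (∃ V, U = 1 + (p : Polynomial (Matrix (Fin n) (Fin n) (ZMod (p ^ k)))) * V) ∧
        (∀ i j, (p : ZMod (p ^ k)) ∣ (X' - X) i j)) :=
  stmt_16_general p k n M N X
end

section
/- Uniqueness in noncommutative Weierstrass preparation: Let A_k = M_n(ℤ/p^k ℤ), X ∈ A_k, and M(t) ∈ A_k[t]. If f(t) ∈ A_k[t] and f(t) ≠ 0, then (X + I_n t + p t² M(t)) · f(t) is not a constant polynomial; that is, if (X + I_n t + p t² M(t)) · f(t) = Y with Y ∈ A_k, then f(t) = 0 and Y = 0. Consequently, the pair (U(t), X') in the finite noncommutative Weierstrass preparation theorem is unique. -/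
/-- Uniqueness in noncommutative Weierstrass preparation. Let
`A_k = M_n(ℤ/p^k ℤ)`, `X ∈ A_k`, and `M(t) ∈ A_k[t]`. If `f(t) ∈ A_k[t]` is nonzero,
then `(X + I_n t + p t² M(t)) · f(t)` is not a constant polynomial. Consequently, the
pair `(U(t), X')` in the finite noncommutative Weierstrass preparation theorem is
unique. -/
theorem stmt_17 (p k n : ℕ) [Fact p.Prime] (hk : 1 ≤ k) (hn : 1 ≤ n)
    (X : Matrix (Fin n) (Fin n) (ZMod (p ^ k)))
    (M : Polynomial (Matrix (Fin n) (Fin n) (ZMod (p ^ k)))) :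
    (∀ f : Polynomial (Matrix (Fin n) (Fin n) (ZMod (p ^ k))), f ≠ 0 →
      ∀ Y : Matrix (Fin n) (Fin n) (ZMod (p ^ k)),
        (Polynomial.C X + Polynomial.X +
            (p : Polynomial (Matrix (Fin n) (Fin n) (ZMod (p ^ k)))) * Polynomial.X ^ 2 * M)
          * f ≠ Polynomial.C Y) ∧
    (∀ (N U₁ U₂ : Polynomial (Matrix (Fin n) (Fin n) (ZMod (p ^ k))))
        (X₁ X₂ : Matrix (Fin n) (Fin n) (ZMod (p ^ k))),
      (Polynomial.C X + Polynomial.X +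
          (p : Polynomial (Matrix (Fin n) (Fin n) (ZMod (p ^ k)))) * Polynomial.X ^ 2 * M)
        * U₁ =
        Polynomial.C X₁ + Polynomial.X +
          (p : Polynomial (Matrix (Fin n) (Fin n) (ZMod (p ^ k)))) * Polynomial.X ^ 2 * N →
      (Polynomial.C X + Polynomial.X +
          (p : Polynomial (Matrix (Fin n) (Fin n) (ZMod (p ^ k)))) * Polynomial.X ^ 2 * M)
        * U₂ =
        Polynomial.C X₂ + Polynomial.X +
          (p : Polynomial (Matrix (Fin n) (Fin n) (ZMod (p ^ k)))) * Polynomial.X ^ 2 * N →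
      U₁ = U₂ ∧ X₁ = X₂) := by
  haveI : NeZero n := ⟨by omega⟩
  haveI : Fact (1 < p ^ k) := ⟨by
    have hp := (Fact.out : p.Prime).two_le
    calc 1 < p := by omega
    _ ≤ p ^ k := Nat.le_self_pow (by omega) p⟩
  set g : Polynomial (Matrix (Fin n) (Fin n) (ZMod (p ^ k))) := Polynomial.C X + Polynomial.X +
      (p : Polynomial (Matrix (Fin n) (Fin n) (ZMod (p ^ k)))) * Polynomial.X ^ 2 * M with hg
  have key : ∀ f : Polynomial (Matrix (Fin n) (Fin n) (ZMod (p ^ k))), f ≠ 0 →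
      ∀ Y : Matrix (Fin n) (Fin n) (ZMod (p ^ k)), g * f ≠ Polynomial.C Y := by
    intro f hf Y hY
    have hcast : ((p : Polynomial (Matrix (Fin n) (Fin n) (ZMod (p ^ k))))) ^ k = 0 := by
      rw [← Nat.cast_pow]
      norm_cast
      simp [ZMod.natCast_self]
    have hex : ∃ m, (p : Polynomial (Matrix (Fin n) (Fin n) (ZMod (p ^ k)))) ^ m * f = 0 :=
      ⟨k, by rw [hcast, zero_mul]⟩
    set m := Nat.find hex with hmdef
    have hm : (p : Polynomial (Matrix (Fin n) (Fin n) (ZMod (p ^ k)))) ^ m * f = 0 :=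
      Nat.find_spec hex
    have hmpos : m ≠ 0 := by
      intro h
      apply hf
      simpa [h] using hm
    set f' : Polynomial (Matrix (Fin n) (Fin n) (ZMod (p ^ k))) :=
      (p : Polynomial (Matrix (Fin n) (Fin n) (ZMod (p ^ k)))) ^ (m - 1) * f with hf'def
    have hf'ne : f' ≠ 0 := Nat.find_min hex (by omega)
    have hpf' : (p : Polynomial (Matrix (Fin n) (Fin n) (ZMod (p ^ k)))) * f' = 0 := by
      rw [hf'def, ← mul_assoc, ← pow_succ']
      have : m - 1 + 1 = m := by omega
      rw [this]
      exact hm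
    -- g * f' is a constant
    have h1 : g * f' = Polynomial.C (((p ^ (m - 1) : ℕ) :
        Matrix (Fin n) (Fin n) (ZMod (p ^ k))) * Y) := by
      have hc : g * ((p : Polynomial (Matrix (Fin n) (Fin n) (ZMod (p ^ k)))) ^ (m - 1) * f)
          = (p : Polynomial (Matrix (Fin n) (Fin n) (ZMod (p ^ k)))) ^ (m - 1) * (g * f) := by
        rw [← mul_assoc, ← mul_assoc]
        congr 1
        rw [← Nat.cast_pow]
        exact ((Nat.cast_commute (p ^ (m - 1)) g).symm).eq
      rw [hf'def, hc, hY, ← Nat.cast_pow, ← Polynomial.C_eq_natCast, ← Polynomial.C_mul]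
    -- the p-part kills f'
    have h2 : (p : Polynomial (Matrix (Fin n) (Fin n) (ZMod (p ^ k)))) * Polynomial.X ^ 2 * M
        * f' = 0 := by
      have hcomm : (p : Polynomial (Matrix (Fin n) (Fin n) (ZMod (p ^ k))))
            * (Polynomial.X ^ 2 * M)
          = (Polynomial.X ^ 2 * M) * (p : Polynomial (Matrix (Fin n) (Fin n) (ZMod (p ^ k)))) :=
        (Nat.cast_commute p (Polynomial.X ^ 2 * M)).eq
      rw [mul_assoc (p : Polynomial (Matrix (Fin n) (Fin n) (ZMod (p ^ k)))) (Polynomial.X ^ 2) M,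
        hcomm, mul_assoc, hpf', mul_zero]
    have h3 : (Polynomial.X + Polynomial.C X) * f'
        = Polynomial.C (((p ^ (m - 1) : ℕ) : Matrix (Fin n) (Fin n) (ZMod (p ^ k))) * Y) := by
      have h1' := h1
      rw [hg, add_mul, add_mul, h2, add_zero] at h1'
      rw [add_mul, add_comm]
      exact h1'
    -- degree contradiction
    have hmon : (Polynomial.X + Polynomial.C X).Monic := Polynomial.monic_X_add_C X
    have hdeg : ((Polynomial.X + Polynomial.C X) * f').natDegree
        = (Polynomial.X + Polynomial.C X).natDegree + f'.natDegree :=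
      Polynomial.Monic.natDegree_mul' hmon hf'ne
    rw [h3, Polynomial.natDegree_C, Polynomial.natDegree_X_add_C] at hdeg
    omega
  refine ⟨key, ?_⟩
  intro N U₁ U₂ X₁ X₂ h₁ h₂
  have hsub : g * (U₁ - U₂) = Polynomial.C (X₁ - X₂) := by
    rw [mul_sub, h₁, h₂, map_sub]
    abel
  have hU : U₁ = U₂ := by
    by_contra hne
    exact key (U₁ - U₂) (sub_ne_zero.mpr hne) (X₁ - X₂) hsub
  refine ⟨hU, ?_⟩
  have hz : Polynomial.C (X₁ - X₂) = 0 := by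
    rw [← hsub, hU, sub_self, mul_zero]
  have := Polynomial.C_injective (by rw [hz, map_zero] : Polynomial.C (X₁ - X₂) = Polynomial.C 0)
  exact sub_eq_zero.mp this
end

section
/- Division lemma in the noncommutative setting: Let A = M_n(ℤ_p), Â[t] the ring of power series over A with coefficients tending to 0 p-adically, X ∈ A, and M(t) ∈ Â[t]. Set g(t) = X + I_n t + p t² M(t). Then for every f(t) ∈ Â[t] there exist q(t) ∈ Â[t] and r ∈ A with f(t) = g(t)·q(t) + r. -/
/-!
Division by the linear series `t + X` is explicit: the quotient has coefficients
`q_l = ∑_m (-X)^m f_{l+1+m}`, which converge because `f_j → 0` `p`-adically, and the remainder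
is `f_0 - X q_0`. Since `g = (t + X) + p t² M`, dividing `f` by `t + X` gives
`f = g q₀ + r₀ + p f₁` with `f₁ = -t² M q₀` again in `Â[t]`. Iterating,
`f = g ∑_{s<k} p^s q_s + ∑_{s<k} p^s r_s + p^k f_k`, and the `p`-adic series `∑ p^s q_s` and
`∑ p^s r_s` converge to the required quotient and remainder.
-/

/-- A power series over `A = M_n(ℤ_p)` lies in `Â[t]`: its coefficients tend to `0`
`p`-adically, i.e. for every `k` all but finitely many coefficients are divisible
(entrywise) by `p^k`. -/
def MemAhat (p n : ℕ) [Fact p.Prime]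
    (f : PowerSeries (Matrix (Fin n) (Fin n) ℤ_[p])) : Prop :=
  ∀ k : ℕ, ∃ N : ℕ, ∀ l ≥ N, ∀ i j,
    (p : ℤ_[p]) ^ k ∣ (PowerSeries.coeff l f) i j

open Filter Topology
open PowerSeries (C coeff mk)

section Semiring
variable {p : ℕ} {R : Type*} [Semiring R]

theorem natCast_pow_dvd_mul_left {k : ℕ} {b : R} (h : (p : R) ^ k ∣ b) (a : R) :
    (p : R) ^ k ∣ a * b := by
  obtain ⟨c, rfl⟩ := h
  exact ⟨a * c, by rw [← mul_assoc, ← mul_assoc, ((Nat.cast_commute p a).pow_left k).eq]⟩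

theorem PowerSeries.coeff_natCast_pow_mul (k l : ℕ) (F : PowerSeries R) :
    coeff l ((p : PowerSeries R) ^ k * F) = (p : R) ^ k * coeff l F := by
  rw [← map_natCast C, ← map_pow, PowerSeries.coeff_C_mul]

theorem PowerSeries.natCast_pow_dvd_iff {k : ℕ} {F : PowerSeries R} :
    (p : PowerSeries R) ^ k ∣ F ↔ ∀ l, (p : R) ^ k ∣ coeff l F := by
  refine ⟨fun ⟨G, hG⟩ l => ⟨coeff l G, by rw [hG, coeff_natCast_pow_mul]⟩, fun h => ?_⟩
  choose G hG using h
  exact ⟨mk G, PowerSeries.ext fun l => by rw [coeff_natCast_pow_mul, PowerSeries.coeff_mk, hG]⟩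

end Semiring

section Ring
variable {p : ℕ} {R : Type*} [Ring R]

variable (p R) in
/-- `Â[t]`: the power series whose coefficients tend to `0` `p`-adically. -/
def restrictedPowerSeries : Subring (PowerSeries R) where
  carrier := {f | ∀ k, ∀ᶠ l in atTop, (p : R) ^ k ∣ coeff l f}
  zero_mem' _ := .of_forall fun _ => by simp
  one_mem' _ := (eventually_ge_atTop 1).mono fun l hl => by
    simp [PowerSeries.coeff_one, show l ≠ 0 by omega]
  add_mem' hf hg k := (hf k).and (hg k) |>.mono fun _ h => dvd_add h.1 h.2
  neg_mem' hf k := (hf k).mono fun _ h => by simpa using h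
  mul_mem' {f g} hf hg k := by
    obtain ⟨Nf, hNf⟩ := (hf k).exists_forall_of_atTop
    obtain ⟨Ng, hNg⟩ := (hg k).exists_forall_of_atTop
    filter_upwards [eventually_ge_atTop (Nf + Ng)] with l hl
    rw [PowerSeries.coeff_mul]
    refine Finset.dvd_sum fun ij hij => ?_
    rw [Finset.HasAntidiagonal.mem_antidiagonal] at hij
    rcases le_or_gt Nf ij.1 with h | h
    · exact (hNf _ h).mul_right _
    · exact natCast_pow_dvd_mul_left (hNg _ (by omega)) _

theorem X_mem_restrictedPowerSeries :
    (PowerSeries.X : PowerSeries R) ∈ restrictedPowerSeries p R :=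
  fun _ => (eventually_ge_atTop 2).mono fun l hl => by
    simp [PowerSeries.coeff_X, show l ≠ 1 by omega]

end Ring

theorem Matrix.natCast_pow_mul_apply {ι R : Type*} [Fintype ι] [DecidableEq ι] [Semiring R]
    (p k : ℕ) (B : Matrix ι ι R) (i j : ι) :
    ((p : Matrix ι ι R) ^ k * B) i j = (p : R) ^ k * B i j := by
  rw [← Nat.cast_pow, ← nsmul_eq_mul, Matrix.smul_apply, nsmul_eq_mul, Nat.cast_pow]

theorem Matrix.natCast_pow_dvd_iff {ι R : Type*} [Fintype ι] [DecidableEq ι] [Semiring R]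
    {p k : ℕ} {B : Matrix ι ι R} : (p : Matrix ι ι R) ^ k ∣ B ↔ ∀ i j, (p : R) ^ k ∣ B i j := by
  refine ⟨fun ⟨D, hD⟩ i j => ⟨D i j, by rw [hD, natCast_pow_mul_apply]⟩, fun h => ?_⟩
  choose D hD using h
  exact ⟨Matrix.of D, Matrix.ext fun i j => by rw [natCast_pow_mul_apply, Matrix.of_apply, hD]⟩

namespace PadicInt
variable {p : ℕ} [Fact p.Prime]

theorem natCast_pow_dvd_iff_norm_le {k : ℕ} {x : ℤ_[p]} :
    (p : ℤ_[p]) ^ k ∣ x ↔ ‖x‖ ≤ (p : ℝ)⁻¹ ^ k := by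
  rw [inv_pow, ← zpow_natCast, ← zpow_neg, norm_le_pow_iff_mem_span_pow,
    Ideal.mem_span_singleton]

theorem isClosed_setOf_natCast_pow_dvd (k : ℕ) :
    IsClosed {x : ℤ_[p] | (p : ℤ_[p]) ^ k ∣ x} := by
  simp_rw [natCast_pow_dvd_iff_norm_le]
  exact isClosed_le continuous_norm continuous_const

theorem tendsto_zero_of_natCast_pow_dvd {c : ℕ → ℤ_[p]}
    (h : ∀ k, ∀ᶠ l in atTop, (p : ℤ_[p]) ^ k ∣ c l) : Tendsto c atTop (𝓝 0) := by
  have hp : (p : ℝ)⁻¹ < 1 := inv_lt_one_of_one_lt₀ (mod_cast (Fact.out : p.Prime).one_lt)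
  refine NormedAddGroup.tendsto_nhds_zero.2 fun ε hε => ?_
  obtain ⟨k, hk⟩ := exists_pow_lt_of_lt_one hε hp
  exact (h k).mono fun l hl => (natCast_pow_dvd_iff_norm_le.1 hl).trans_lt hk

end PadicInt

namespace Matrix
variable {p : ℕ} [Fact p.Prime] {ι : Type*} [Fintype ι] [DecidableEq ι]
local notation "𝔸" => Matrix ι ι ℤ_[p]

theorem tendsto_zero_of_natCast_pow_dvd {c : ℕ → 𝔸}
    (h : ∀ k, ∀ᶠ l in atTop, (p : 𝔸) ^ k ∣ c l) : Tendsto c atTop (𝓝 0) :=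
  tendsto_pi_nhds.2 fun i => tendsto_pi_nhds.2 fun j => PadicInt.tendsto_zero_of_natCast_pow_dvd
    fun k => (h k).mono fun _ hl => Matrix.natCast_pow_dvd_iff.1 hl i j

theorem summable_of_natCast_pow_dvd {c : ℕ → 𝔸}
    (h : ∀ k, ∀ᶠ l in atTop, (p : 𝔸) ^ k ∣ c l) : Summable c :=
  Pi.summable.2 fun i => Pi.summable.2 fun j =>
    NonarchimedeanAddGroup.summable_of_tendsto_cofinite_zero <| by
      rw [Nat.cofinite_eq_atTop]
      exact (continuous_apply_apply i j).tendsto' 0 0 rfl |>.comp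
        (tendsto_zero_of_natCast_pow_dvd h)

theorem isClosed_setOf_natCast_pow_dvd (k : ℕ) : IsClosed {B : 𝔸 | (p : 𝔸) ^ k ∣ B} := by
  simp_rw [Matrix.natCast_pow_dvd_iff, Set.ofPred_forall]
  exact isClosed_iInter fun i => isClosed_iInter fun j =>
    (PadicInt.isClosed_setOf_natCast_pow_dvd k).preimage (continuous_id.matrix_elem i j)

theorem natCast_pow_dvd_tsum {k : ℕ} {c : ℕ → 𝔸} (hc : Summable c)
    (h : ∀ m, (p : 𝔸) ^ k ∣ c m) : (p : 𝔸) ^ k ∣ ∑' m, c m :=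
  (isClosed_setOf_natCast_pow_dvd k).mem_of_tendsto hc.hasSum.tendsto_sum_nat
    (.of_forall fun _ => Finset.dvd_sum fun m _ => h m)

theorem eq_zero_of_forall_natCast_pow_dvd {B : 𝔸} (h : ∀ k, (p : 𝔸) ^ k ∣ B) : B = 0 :=
  tendsto_nhds_unique tendsto_const_nhds
    (tendsto_zero_of_natCast_pow_dvd fun k => .of_forall fun _ => h k)

theorem summable_natCast_pow_mul (x : ℕ → 𝔸) : Summable fun s => (p : 𝔸) ^ s * x s :=
  summable_of_natCast_pow_dvd fun k =>
    (eventually_ge_atTop k).mono fun _ hs => (pow_dvd_pow _ hs).mul_right _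

theorem natCast_pow_dvd_tsum_sub_sum (x : ℕ → 𝔸) (k : ℕ) :
    (p : 𝔸) ^ k ∣ ∑' s, (p : 𝔸) ^ s * x s - ∑ s ∈ Finset.range k, (p : 𝔸) ^ s * x s := by
  rw [← (summable_natCast_pow_mul x).sum_add_tsum_nat_add k, add_sub_cancel_left]
  exact natCast_pow_dvd_tsum ((summable_nat_add_iff k).2 (summable_natCast_pow_mul x))
    fun s => (pow_dvd_pow _ (Nat.le_add_left k s)).mul_right _

end Matrix

section Division
variable {p : ℕ} [Fact p.Prime] {ι : Type*} [Fintype ι] [DecidableEq ι]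
local notation "𝔸" => Matrix ι ι ℤ_[p]

noncomputable def linDivQuot (X : 𝔸) (f : PowerSeries 𝔸) : PowerSeries 𝔸 :=
  mk fun l => ∑' m, (-X) ^ m * coeff (l + 1 + m) f

noncomputable def linDivRem (X : 𝔸) (f : PowerSeries 𝔸) : 𝔸 :=
  coeff 0 f - X * coeff 0 (linDivQuot X f)

variable {f : PowerSeries (Matrix ι ι ℤ_[p])}

theorem summable_linDivQuot_terms (hf : f ∈ restrictedPowerSeries p 𝔸) (X : 𝔸) (l : ℕ) :
    Summable fun m => (-X) ^ m * coeff (l + 1 + m) f :=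
  Matrix.summable_of_natCast_pow_dvd fun k => by
    obtain ⟨N, hN⟩ := eventually_atTop.1 (hf k)
    exact (eventually_ge_atTop N).mono fun m hm => natCast_pow_dvd_mul_left (hN _ (by omega)) _

theorem coeff_linDivQuot (hf : f ∈ restrictedPowerSeries p 𝔸) (X : 𝔸) (l : ℕ) :
    coeff l (linDivQuot X f) = coeff (l + 1) f - X * coeff (l + 1) (linDivQuot X f) := by
  simp only [linDivQuot, PowerSeries.coeff_mk]
  rw [(summable_linDivQuot_terms hf X l).tsum_eq_zero_add,
    ← (summable_linDivQuot_terms hf X (l + 1)).tsum_mul_left, sub_eq_add_neg, ← tsum_neg]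
  refine congrArg₂ _ (by rw [pow_zero, one_mul, add_zero]) (tsum_congr fun m => ?_)
  rw [pow_succ', show l + 1 + (m + 1) = l + 1 + 1 + m by omega, neg_mul, neg_mul, mul_assoc]

theorem linDivQuot_mem (hf : f ∈ restrictedPowerSeries p 𝔸) (X : 𝔸) :
    linDivQuot X f ∈ restrictedPowerSeries p 𝔸 := fun k => by
  obtain ⟨N, hN⟩ := eventually_atTop.1 (hf k)
  filter_upwards [eventually_ge_atTop N] with l hl
  rw [linDivQuot, PowerSeries.coeff_mk]
  exact Matrix.natCast_pow_dvd_tsum (summable_linDivQuot_terms hf X l)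
    fun m => natCast_pow_dvd_mul_left (hN _ (by omega)) _

theorem eq_linDivQuot_add_linDivRem (hf : f ∈ restrictedPowerSeries p 𝔸) (X : 𝔸) :
    f = (C X + PowerSeries.X) * linDivQuot X f + C (linDivRem X f) := by
  refine PowerSeries.ext fun l => ?_
  rcases l with _ | l
  · simp [linDivRem]
  · simp [add_mul, PowerSeries.coeff_succ_X_mul, coeff_linDivQuot hf X l]

end Division

section Iteration
variable {p : ℕ} [Fact p.Prime] {ι : Type*} [Fintype ι] [DecidableEq ι]
local notation "𝔸" => Matrix ι ι ℤ_[p]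

noncomputable def divisorSeries (X : 𝔸) (M : PowerSeries 𝔸) : PowerSeries 𝔸 :=
  C X + PowerSeries.X + (p : PowerSeries 𝔸) * PowerSeries.X ^ 2 * M

noncomputable def divError (X : 𝔸) (M f : PowerSeries 𝔸) : PowerSeries 𝔸 :=
  -(PowerSeries.X ^ 2 * M * linDivQuot X f)

variable {X : Matrix ι ι ℤ_[p]} {M f : PowerSeries (Matrix ι ι ℤ_[p])}

theorem eq_divisorSeries_mul_add (hf : f ∈ restrictedPowerSeries p 𝔸) :
    f = divisorSeries X M * linDivQuot X f + C (linDivRem X f) + p * divError X M f := by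
  conv_lhs => rw [eq_linDivQuot_add_linDivRem hf X]
  simp only [divisorSeries, divError, add_mul, mul_neg, mul_assoc]
  abel

theorem divError_mem (hM : M ∈ restrictedPowerSeries p 𝔸)
    (hf : f ∈ restrictedPowerSeries p 𝔸) :
    divError X M f ∈ restrictedPowerSeries p 𝔸 :=
  neg_mem <| mul_mem (mul_mem (pow_mem X_mem_restrictedPowerSeries 2) hM) (linDivQuot_mem hf X)

theorem divError_iterate_mem (hM : M ∈ restrictedPowerSeries p 𝔸)
    (hf : f ∈ restrictedPowerSeries p 𝔸) (s : ℕ) :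
    (divError X M)^[s] f ∈ restrictedPowerSeries p 𝔸 := by
  induction s with
  | zero => exact hf
  | succ s ih => rw [Function.iterate_succ_apply']; exact divError_mem hM ih

theorem eq_divisorSeries_mul_add_of_iterate (hM : M ∈ restrictedPowerSeries p 𝔸)
    (hf : f ∈ restrictedPowerSeries p 𝔸) (k : ℕ) :
    f = divisorSeries X M * ∑ s ∈ Finset.range k,
          (p : PowerSeries 𝔸) ^ s * linDivQuot X ((divError X M)^[s] f) +
        C (∑ s ∈ Finset.range k, (p : 𝔸) ^ s * linDivRem X ((divError X M)^[s] f)) +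
        (p : PowerSeries 𝔸) ^ k * (divError X M)^[k] f := by
  induction k with
  | zero => simp
  | succ k ih =>
    have hstep :=
      eq_divisorSeries_mul_add (X := X) (M := M) (divError_iterate_mem (X := X) hM hf k)
    set F := (divError X M)^[k] f
    have hcomm : divisorSeries X M * ((p : PowerSeries 𝔸) ^ k * linDivQuot X F) =
        (p : PowerSeries 𝔸) ^ k * (divisorSeries X M * linDivQuot X F) := by
      rw [← mul_assoc, ← mul_assoc, ((Nat.cast_commute p _).pow_left k).eq]
    rw [Function.iterate_succ_apply', Finset.sum_range_succ, Finset.sum_range_succ, map_add,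
      map_mul, map_pow, map_natCast, mul_add, hcomm, pow_succ, mul_assoc _ (p : PowerSeries 𝔸)]
    conv_lhs => rw [ih, hstep]
    rw [mul_add, mul_add]
    abel

end Iteration

section Series
variable {p : ℕ} [Fact p.Prime] {ι : Type*} [Fintype ι] [DecidableEq ι]
local notation "𝔸" => Matrix ι ι ℤ_[p]

noncomputable def pAdicSum (x : ℕ → PowerSeries 𝔸) : PowerSeries 𝔸 :=
  mk fun l => ∑' s, (p : 𝔸) ^ s * coeff l (x s)

theorem natCast_pow_dvd_pAdicSum_sub_sum (x : ℕ → PowerSeries 𝔸) (k : ℕ) :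
    (p : PowerSeries 𝔸) ^ k ∣ pAdicSum x - ∑ s ∈ Finset.range k, (p : PowerSeries 𝔸) ^ s * x s :=
  PowerSeries.natCast_pow_dvd_iff.2 fun l => by
    simpa [pAdicSum, PowerSeries.coeff_natCast_pow_mul] using
      Matrix.natCast_pow_dvd_tsum_sub_sum (fun s => coeff l (x s)) k

theorem pAdicSum_mem {x : ℕ → PowerSeries 𝔸} (hx : ∀ s, x s ∈ restrictedPowerSeries p 𝔸) :
    pAdicSum x ∈ restrictedPowerSeries p 𝔸 := fun k => by
  filter_upwards [(Filter.eventually_all_finset (Finset.range k)).2 fun s _ => hx s k] with l hl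
  rw [← sub_add_cancel (coeff l (pAdicSum x)) (∑ s ∈ Finset.range k, (p : 𝔸) ^ s * coeff l (x s))]
  refine dvd_add ?_ (Finset.dvd_sum fun s hs => natCast_pow_dvd_mul_left (hl s hs) _)
  simpa [pAdicSum] using Matrix.natCast_pow_dvd_tsum_sub_sum (fun s => coeff l (x s)) k

theorem PowerSeries.eq_zero_of_forall_natCast_pow_dvd {F : PowerSeries 𝔸}
    (h : ∀ k, (p : PowerSeries 𝔸) ^ k ∣ F) : F = 0 :=
  PowerSeries.ext fun l => by
    simpa using Matrix.eq_zero_of_forall_natCast_pow_dvd fun k =>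
      PowerSeries.natCast_pow_dvd_iff.1 (h k) l

end Series

section Main
variable {p : ℕ} [Fact p.Prime] {ι : Type*} [Fintype ι] [DecidableEq ι]
local notation "𝔸" => Matrix ι ι ℤ_[p]

theorem exists_eq_divisorSeries_mul_add_C (X : 𝔸) {M f : PowerSeries 𝔸}
    (hM : M ∈ restrictedPowerSeries p 𝔸) (hf : f ∈ restrictedPowerSeries p 𝔸) :
    ∃ q ∈ restrictedPowerSeries p 𝔸, ∃ r : 𝔸, f = divisorSeries X M * q + C r := by
  set F := fun s => (divError X M)^[s] f
  let Q := fun s => linDivQuot X (F s)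
  let R := fun s => linDivRem X (F s)
  refine ⟨pAdicSum Q, pAdicSum_mem fun s => linDivQuot_mem (divError_iterate_mem hM hf s) X,
    ∑' s, (p : 𝔸) ^ s * R s, ?_⟩
  rw [← sub_eq_zero]
  refine PowerSeries.eq_zero_of_forall_natCast_pow_dvd fun k => ?_
  have hk : f - (divisorSeries X M * pAdicSum Q + C (∑' s, (p : 𝔸) ^ s * R s)) =
      -(divisorSeries X M * (pAdicSum Q - ∑ s ∈ Finset.range k, (p : PowerSeries 𝔸) ^ s * Q s)) -
        C (∑' s, (p : 𝔸) ^ s * R s - ∑ s ∈ Finset.range k, (p : 𝔸) ^ s * R s) +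
        (p : PowerSeries 𝔸) ^ k * F k := by
    conv_lhs => rw [eq_divisorSeries_mul_add_of_iterate (X := X) hM hf k]
    rw [mul_sub, map_sub]
    abel
  have hR := map_dvd C (Matrix.natCast_pow_dvd_tsum_sub_sum R k)
  rw [map_pow, map_natCast] at hR
  rw [hk]
  exact dvd_add (dvd_sub (dvd_neg.2 (natCast_pow_dvd_mul_left
    (natCast_pow_dvd_pAdicSum_sub_sum Q k) _)) hR) (dvd_mul_right _ _)

end Main

theorem memAhat_iff {p n : ℕ} [Fact p.Prime] {f : PowerSeries (Matrix (Fin n) (Fin n) ℤ_[p])} :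
    MemAhat p n f ↔ f ∈ restrictedPowerSeries p (Matrix (Fin n) (Fin n) ℤ_[p]) := by
  simp only [MemAhat, ← Matrix.natCast_pow_dvd_iff, ← eventually_atTop]
  rfl

/-- Division lemma in the noncommutative setting. Let
`A = M_n(ℤ_p)`, `Â[t]` the ring of power series over `A` with coefficients tending to
`0` `p`-adically, `X ∈ A`, and `M(t) ∈ Â[t]`. Set `g(t) = X + I_n t + p t² M(t)`.
Then for every `f(t) ∈ Â[t]` there exist `q(t) ∈ Â[t]` and `r ∈ A` with
`f(t) = g(t)·q(t) + r`. -/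
theorem stmt_18 (p n : ℕ) [Fact p.Prime]
    (X : Matrix (Fin n) (Fin n) ℤ_[p])
    (M : PowerSeries (Matrix (Fin n) (Fin n) ℤ_[p])) (hM : MemAhat p n M)
    (f : PowerSeries (Matrix (Fin n) (Fin n) ℤ_[p])) (hf : MemAhat p n f) :
    ∃ (q : PowerSeries (Matrix (Fin n) (Fin n) ℤ_[p])) (r : Matrix (Fin n) (Fin n) ℤ_[p]),
      MemAhat p n q ∧
      f = (PowerSeries.C X + PowerSeries.X +
            (p : PowerSeries (Matrix (Fin n) (Fin n) ℤ_[p])) * PowerSeries.X ^ 2 * M) * q +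
          PowerSeries.C r := by
  obtain ⟨q, hq, r, hfqr⟩ :=
    exists_eq_divisorSeries_mul_add_C X (memAhat_iff.1 hM) (memAhat_iff.1 hf)
  exact ⟨q, r, memAhat_iff.2 hq, hfqr⟩
end
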